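/- arXiv:1307.4251 — 13 statements merged into one kernel-verified Lean document; each statement's English description precedes it below -/
import Mathlib

section
/- Let d > 2 be an integer divisible by 4. Then the subgroup {1, d/2 + 1} of (ℤ/dℤ)ˣ is balanced, i.e., every coset C of this subgroup satisfies |C ∩ A| = |C ∩ B|. -/
/-!
Multiplication by `u = d/2 + 1` is a bijection of each coset of `⟨u⟩` that sends the units in
`(d/2, d)` onto those in `(0, d/2)`. Indeed a unit `x` of `ℤ/dℤ` has odd residue, so
`x * (d/2) = d/2` and `x * u = x + d/2`; and adding `d/2` moves a residue other than `d/2` into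
the opposite half. A unit never has residue `d/2`, which is even because `4 ∣ d`.
-/

/-- A subgroup `H` of `(ℤ/dℤ)ˣ` is *balanced* if every coset of `H` meets the set of
units with least positive residue in `(0, d/2)` and the set of units with least positive
residue in `(d/2, d)` in sets of the same cardinality. -/
def IsBalanced (d : ℕ) (H : Subgroup (ZMod d)ˣ) : Prop :=
  ∀ g : (ZMod d)ˣ,
    {x : (ZMod d)ˣ | (∃ h ∈ H, x = g * h) ∧ 2 * ((x : ZMod d)).val < d}.ncard =
    {x : (ZMod d)ˣ | (∃ h ∈ H, x = g * h) ∧ d < 2 * ((x : ZMod d)).val}.ncard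

theorem Subgroup.ncard_coset_inter_eq_of_mul_mem {G : Type*} [Group G] {H : Subgroup G}
    {h : G} (hh : h ∈ H) {P Q : G → Prop} (hPQ : ∀ x, P (x * h) ↔ Q x) (g : G) :
    {x | (∃ k ∈ H, x = g * k) ∧ P x}.ncard = {x | (∃ k ∈ H, x = g * k) ∧ Q x}.ncard := by
  symm
  refine Set.ncard_congr (fun x _ => x * h) ?_ (fun _ _ _ _ => mul_right_cancel) ?_
  · rintro x ⟨⟨k, hk, rfl⟩, hx⟩
    exact ⟨⟨k * h, H.mul_mem hk hh, mul_assoc g k h⟩, (hPQ _).2 hx⟩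
  · rintro y ⟨⟨k, hk, rfl⟩, hy⟩
    refine ⟨g * k * h⁻¹, ⟨⟨k * h⁻¹, H.mul_mem hk (H.inv_mem hh), mul_assoc g k h⁻¹⟩, ?_⟩, ?_⟩
    · rwa [← hPQ, inv_mul_cancel_right]
    · exact inv_mul_cancel_right (g * k) h

namespace ZMod

variable {d : ℕ}

theorem odd_val_coe_unit (h2 : 2 ∣ d) (x : (ZMod d)ˣ) : Odd (x : ZMod d).val :=
  ((val_coe_unit_coprime x).coprime_dvd_right h2).symm.odd_of_left

theorem mul_half_of_odd_val [NeZero d] (h2 : 2 ∣ d) {x : ZMod d} (hx : Odd x.val) :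
    x * ((d / 2 : ℕ) : ZMod d) = (d / 2 : ℕ) := by
  obtain ⟨k, hk⟩ := hx
  have hmul : x.val * (d / 2) = k * d + d / 2 := by
    rw [hk]
    obtain ⟨m, rfl⟩ := h2
    simp only [Nat.mul_div_cancel_left m two_pos]
    ring
  rw [← natCast_zmod_val x, ← Nat.cast_mul, hmul, Nat.cast_add, Nat.cast_mul, natCast_self,
    mul_zero, zero_add]

theorem two_mul_val_add_half_lt_iff [NeZero d] (h2 : 2 ∣ d) {x : ZMod d} (hx : x.val ≠ d / 2) :
    2 * (x + ((d / 2 : ℕ) : ZMod d)).val < d ↔ d < 2 * x.val := by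
  have hlt : x.val < d := val_lt x
  have hpos : 0 < d := Nat.pos_of_neZero d
  rw [val_add, val_natCast, Nat.mod_eq_of_lt (Nat.div_lt_self hpos one_lt_two)]
  rcases hx.lt_or_gt with hsmall | hlarge
  · rw [Nat.mod_eq_of_lt (by omega)]
    omega
  · rw [show x.val + d / 2 = x.val - d / 2 + d by omega, Nat.add_mod_right,
      Nat.mod_eq_of_lt (by omega)]
    omega

end ZMod

theorem balanced_of_half_add_one (d : ℕ) (hd : 2 < d) (h4 : 4 ∣ d)
    (u : (ZMod d)ˣ) (hu : (u : ZMod d) = ((d / 2 : ℕ) : ZMod d) + 1) :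
    IsBalanced d (Subgroup.zpowers u) := by
  have : NeZero d := ⟨by omega⟩
  have h2 : 2 ∣ d := (by norm_num : 2 ∣ 4).trans h4
  refine Subgroup.ncard_coset_inter_eq_of_mul_mem (Subgroup.mem_zpowers u) fun x => ?_
  have hodd := ZMod.odd_val_coe_unit h2 x
  have hxu : ((x * u : (ZMod d)ˣ) : ZMod d) = x + ((d / 2 : ℕ) : ZMod d) := by
    rw [Units.val_mul, hu, mul_add, ZMod.mul_half_of_odd_val h2 hodd, mul_one, add_comm]
  have hhalf_even : Even (d / 2) := even_iff_two_dvd.2 (Nat.dvd_div_of_mul_dvd h4)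
  rw [hxu]
  exact ZMod.two_mul_val_add_half_lt_iff h2 fun h => Nat.not_even_iff_odd.2 hodd (h ▸ hhalf_even)
end

section
/- Let d > 2 and let H ⊆ H' be subgroups of (ℤ/dℤ)ˣ. If H is balanced, then H' is balanced. -/
open scoped Pointwise

open Finset in
theorem ncard_preimage_inter_eq_of_fibers {α β : Type*} [Finite α] (f : α → β) {A B : Set α}
    (h : ∀ b, (f ⁻¹' {b} ∩ A).ncard = (f ⁻¹' {b} ∩ B).ncard) (T : Set β) :
    (f ⁻¹' T ∩ A).ncard = (f ⁻¹' T ∩ B).ncard := by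
  classical
  have := Fintype.ofFinite α
  have hsum (C : Set α) : (f ⁻¹' T ∩ C).ncard =
      ∑ b ∈ {b ∈ univ.image f | b ∈ T}, (f ⁻¹' {b} ∩ C).ncard := by
    rw [Set.ncard_eq_toFinset_card', card_eq_sum_card_fiberwise (f := f)
      (t := {b ∈ univ.image f | b ∈ T}) (fun x hx => by simp_all)]
    refine sum_congr rfl fun b hb => ?_
    rw [Set.ncard_eq_toFinset_card']
    congr 1
    ext x
    grind
  rw [hsum, hsum]
  exact sum_congr rfl fun b _ => h b

/-- Each left coset of `H'` is a union of left cosets of `H`, i.e. of fibres of `G → G ⧸ H`. -/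
theorem ncard_smul_inter_eq_of_le {G : Type*} [Group G] [Finite G] {H H' : Subgroup G}
    (hle : H ≤ H') {A B : Set G}
    (hH : ∀ g : G, (g • (H : Set G) ∩ A).ncard = (g • (H : Set G) ∩ B).ncard) (g : G) :
    (g • (H' : Set G) ∩ A).ncard = (g • (H' : Set G) ∩ B).ncard := by
  have hfib (q : G ⧸ H) :
      (QuotientGroup.mk ⁻¹' {q} ∩ A).ncard = (QuotientGroup.mk ⁻¹' {q} ∩ B).ncard := by
    induction q using QuotientGroup.induction_on with
    | H x =>
      rw [show QuotientGroup.mk ⁻¹' {(x : G ⧸ H)} = x • (H : Set G) from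
        QuotientGroup.eq_class_eq_leftCoset H x]
      exact hH x
  have hsat : g • (H' : Set G) =
      QuotientGroup.mk ⁻¹' (QuotientGroup.mk '' (g • (H' : Set G)) : Set (G ⧸ H)) := by
    refine (Set.subset_preimage_image _ _).antisymm ?_
    rintro y ⟨z, hz, hzy⟩
    rw [mem_leftCoset_iff] at hz ⊢
    rw [QuotientGroup.eq] at hzy
    simpa using H'.mul_mem hz (hle hzy)
  rw [hsat]
  exact ncard_preimage_inter_eq_of_fibers _ hfib _

theorem isBalanced_iff (d : ℕ) (H : Subgroup (ZMod d)ˣ) :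
    IsBalanced d H ↔ ∀ g : (ZMod d)ˣ,
      (g • (H : Set (ZMod d)ˣ) ∩ {x | 2 * (x : ZMod d).val < d}).ncard =
      (g • (H : Set (ZMod d)ˣ) ∩ {x | d < 2 * (x : ZMod d).val}).ncard := by
  have (g : (ZMod d)ˣ) (P : (ZMod d)ˣ → Prop) :
      {x | (∃ h ∈ H, x = g * h) ∧ P x} = g • (H : Set (ZMod d)ˣ) ∩ {x | P x} := by
    ext x
    simp [Set.mem_smul_set, eq_comm]
  simp only [IsBalanced, this]

theorem balanced_mono_general (d : ℕ) (H H' : Subgroup (ZMod d)ˣ)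
    (hle : H ≤ H') (h : IsBalanced d H) : IsBalanced d H' :=
  (isBalanced_iff d H').2 <| ncard_smul_inter_eq_of_le hle ((isBalanced_iff d H).1 h)

theorem balanced_mono (d : ℕ) (hd : 2 < d) (H H' : Subgroup (ZMod d)ˣ)
    (hle : H ≤ H') (h : IsBalanced d H) : IsBalanced d H' :=
  balanced_mono_general d H H' hle h
end

section
/- Let d > 2 and let H be a balanced subgroup of (ℤ/dℤ)ˣ. Then the order of H is even. -/
/-! A unit with least positive residue `d/2` would have a residue dividing `d` and coprime to it,
hence equal to `1`, forcing `d = 2`. So for `d > 2` the trivial coset `H` splits into its lower and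
upper halves, which balance forces to have equal size. -/

theorem ZMod.two_mul_val_unit_ne {d : ℕ} (hd : 2 < d) (u : (ZMod d)ˣ) :
    2 * (u : ZMod d).val ≠ d := by
  intro hu
  have hval : (u : ZMod d).val = 1 :=
    Nat.Coprime.eq_one_of_dvd (ZMod.val_coe_unit_coprime u) ⟨2, by omega⟩
  omega

theorem ZMod.ncard_units_eq_ncard_lower_add_ncard_upper {d : ℕ} (hd : 2 < d)
    (s : Set (ZMod d)ˣ) :
    s.ncard = {x | x ∈ s ∧ 2 * (x : ZMod d).val < d}.ncard +
      {x | x ∈ s ∧ d < 2 * (x : ZMod d).val}.ncard := by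
  have hdisj : Disjoint {x | x ∈ s ∧ 2 * (x : ZMod d).val < d}
      {x | x ∈ s ∧ d < 2 * (x : ZMod d).val} :=
    Set.disjoint_left.2 fun _ hlow hup => lt_asymm hlow.2 hup.2
  rw [← Set.ncard_union_eq hdisj]
  congr 1
  ext x
  simp only [Set.mem_union, Set.mem_ofPred_eq, ← and_or_left]
  exact (and_iff_left (Nat.lt_or_gt_of_ne (ZMod.two_mul_val_unit_ne hd x))).symm

theorem balanced_even_order (d : ℕ) (hd : 2 < d) (H : Subgroup (ZMod d)ˣ)
    (h : IsBalanced d H) : Even (Nat.card H) := by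
  have hH := h 1
  simp only [one_mul, exists_eq_right'] at hH
  rw [← SetLike.coe_sort_coe, Nat.card_coe_set_eq,
    ZMod.ncard_units_eq_ncard_lower_add_ncard_upper hd]
  simp only [SetLike.mem_coe, hH]
  exact ⟨_, rfl⟩
end

section
/- Let d = ℓ^a be an odd prime power with d > 2, and let p be an integer coprime to d. Then the cyclic subgroup ⟨p⟩ of (ℤ/dℤ)ˣ is balanced if and only if -1 ∈ ⟨p⟩. -/
theorem Subgroup.exists_mem_eq_mul_iff_inv_mul_mem {G : Type*} [Group G] {H : Subgroup G}
    {g x : G} :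
    (∃ h ∈ H, x = g * h) ↔ g⁻¹ * x ∈ H :=
  ⟨by rintro ⟨h, hh, rfl⟩; simpa, fun hx => ⟨_, hx, by simp⟩⟩

theorem IsCyclic.eq_of_orderOf_eq_two {G : Type*} [Group G] [IsCyclic G] [Finite G] {x y : G}
    (hx : orderOf x = 2) (hy : orderOf y = 2) : x = y := by
  classical
  have := Fintype.ofFinite G
  have hcard := IsCyclic.card_orderOf_eq_totient (α := G) (d := 2)
    (hx ▸ orderOf_dvd_card)
  rw [Nat.totient_two] at hcard
  exact Finset.card_le_one.mp hcard.le x (by simp [hx]) y (by simp [hy])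

theorem IsCyclic.mem_of_two_dvd_card {G : Type*} [Group G] [IsCyclic G] [Finite G]
    {H : Subgroup G} (hH : 2 ∣ Nat.card H) {z : G} (hz : orderOf z = 2) : z ∈ H := by
  have := Fact.mk Nat.prime_two
  obtain ⟨x, hx⟩ := exists_prime_orderOf_dvd_card' 2 hH
  rw [← IsCyclic.eq_of_orderOf_eq_two (Subgroup.orderOf_coe x ▸ hx) hz]
  exact x.2

namespace ZMod

variable {d : ℕ}

theorem orderOf_neg_one_units (hd : 2 < d) : orderOf (-1 : (ZMod d)ˣ) = 2 := by
  have : Fact (1 < d) := ⟨by omega⟩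
  rw [← orderOf_units, Units.coe_neg_one, orderOf_neg_one, ringChar.eq (ZMod d) d, if_neg hd.ne']

theorem val_neg_units [NeZero d] [Nontrivial (ZMod d)] (x : (ZMod d)ˣ) :
    ((-x : (ZMod d)ˣ) : ZMod d).val = d - (x : ZMod d).val := by
  rw [Units.val_neg, neg_val, if_neg x.ne_zero]

theorem val_units_pos [Nontrivial (ZMod d)] (x : (ZMod d)ˣ) : 0 < (x : ZMod d).val :=
  Nat.pos_of_ne_zero <| (val_ne_zero _).mpr x.ne_zero

end ZMod

section Balanced

variable {d : ℕ}

theorem isBalanced_of_neg_one_mem (hd : 1 < d) {H : Subgroup (ZMod d)ˣ} (hH : -1 ∈ H) :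
    IsBalanced d H := by
  have : Fact (1 < d) := ⟨hd⟩
  intro g
  rw [← Set.ncard_image_of_injective _ neg_injective, Set.image_neg_eq_neg]
  congr 1
  ext x
  have hx := ZMod.val_lt (x : ZMod d)
  have hx0 := ZMod.val_units_pos x
  simp only [Set.mem_neg, Set.mem_ofPred_eq, Subgroup.exists_mem_eq_mul_iff_inv_mul_mem, mul_neg,
    ZMod.val_neg_units]
  rw [← neg_one_mul, H.mul_mem_cancel_left hH]
  exact and_congr_right fun _ => by omega

theorem IsBalanced.two_dvd_card (hodd : Odd d) {H : Subgroup (ZMod d)ˣ}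
    (hH : IsBalanced d H) : 2 ∣ Nat.card H := by
  let lower : Set (ZMod d)ˣ := {x | 2 * (x : ZMod d).val < d}
  have hupper : (H : Set (ZMod d)ˣ) \ lower = {x | x ∈ H ∧ d < 2 * (x : ZMod d).val} := by
    ext x
    obtain ⟨k, rfl⟩ := hodd
    simp only [lower, Set.mem_sdiff, Set.mem_ofPred_eq, SetLike.mem_coe]
    exact and_congr_right fun _ => by omega
  have hsplit := Set.ncard_inter_add_ncard_sdiff_eq_ncard (H : Set (ZMod d)ˣ) lower
  have hbal := hH 1
  simp only [one_mul, exists_eq_right'] at hbal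
  rw [← hupper] at hbal
  rw [← SetLike.coe_sort_coe, Nat.card_coe_set_eq, ← hsplit]
  exact ⟨_, (congrArg (· + _) hbal).trans (two_mul _).symm⟩

theorem isBalanced_iff_neg_one_mem [IsCyclic (ZMod d)ˣ] (hodd : Odd d) (hd : 2 < d)
    (H : Subgroup (ZMod d)ˣ) : IsBalanced d H ↔ -1 ∈ H :=
  ⟨fun hH => IsCyclic.mem_of_two_dvd_card (hH.two_dvd_card hodd)
    (ZMod.orderOf_neg_one_units hd), isBalanced_of_neg_one_mem (by omega)⟩

end Balanced

theorem balanced_iff_neg_one_mem_of_odd_prime_pow_general (ℓ a p : ℕ) (hℓ : ℓ.Prime)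
    (hodd : Odd ℓ) (hd : 2 < ℓ ^ a) (hp : Nat.Coprime p (ℓ ^ a)) :
    IsBalanced (ℓ ^ a) (Subgroup.zpowers (ZMod.unitOfCoprime p hp)) ↔
      (-1 : (ZMod (ℓ ^ a))ˣ) ∈ Subgroup.zpowers (ZMod.unitOfCoprime p hp) := by
  have := ZMod.isCyclic_units_of_prime_pow ℓ hℓ (by rintro rfl; norm_num at hodd) a
  exact isBalanced_iff_neg_one_mem hodd.pow hd _

theorem balanced_iff_neg_one_mem_of_odd_prime_pow (ℓ a p : ℕ) (hℓ : ℓ.Prime)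
    (hodd : Odd ℓ) (ha : 1 ≤ a) (hd : 2 < ℓ ^ a) (hp : Nat.Coprime p (ℓ ^ a)) :
    IsBalanced (ℓ ^ a) (Subgroup.zpowers (ZMod.unitOfCoprime p hp)) ↔
      (-1 : (ZMod (ℓ ^ a))ˣ) ∈ Subgroup.zpowers (ZMod.unitOfCoprime p hp) :=
  balanced_iff_neg_one_mem_of_odd_prime_pow_general ℓ a p hℓ hodd hd hp
end

section
/- Let p be an odd prime and d a positive integer with p ∤ d and d > 2. Then for all sufficiently large j, p is balanced modulo 2^j·d, i.e., the cyclic subgroup ⟨p⟩ of (ℤ/2^jdℤ)ˣ is balanced. -/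
theorem ZMod.natCast_mul_eq_self_of_odd {a w : ℕ} (hw : Odd w) :
    (w : ZMod (2 * a)) * a = a := by
  obtain ⟨m, rfl⟩ := hw
  have h2a : ((2 * a : ℕ) : ZMod (2 * a)) = 0 := ZMod.natCast_self _
  push_cast at h2a ⊢
  linear_combination (m : ZMod (2 * a)) * h2a

theorem ZMod.odd_val_coe_unit_s7 {n : ℕ} (hn : Even n) (x : (ZMod n)ˣ) : Odd (x : ZMod n).val :=
  Nat.coprime_two_left.mp <|
    Nat.Coprime.coprime_dvd_left hn.two_dvd (ZMod.val_coe_unit_coprime x).symm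

theorem isBalanced_of_mem_of_forall_swap {n : ℕ} {H : Subgroup (ZMod n)ˣ} {w : (ZMod n)ˣ}
    (hw : w ∈ H)
    (hswap : ∀ x : (ZMod n)ˣ,
      2 * (x : ZMod n).val < n ↔ n < 2 * ((x * w : (ZMod n)ˣ) : ZMod n).val) :
    IsBalanced n H := by
  intro g
  rw [← Set.ncard_image_of_injective _ (mul_left_injective w), Set.image_mul_right]
  congr 1
  ext y
  refine and_congr
    ⟨fun ⟨h, hh, e⟩ => ⟨h * w, H.mul_mem hh hw, by simp [← mul_assoc, ← e]⟩,
      fun ⟨h, hh, e⟩ => ⟨h * w⁻¹, H.mul_mem hh (H.inv_mem hw), by simp [e, mul_assoc]⟩⟩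
    ?_
  simpa using hswap (y * w⁻¹)

theorem isBalanced_of_one_add_half_mem {n h : ℕ} (hn : n = 2 * h) (hh : Even h) (h0 : h ≠ 0)
    {H : Subgroup (ZMod n)ˣ} {w : (ZMod n)ˣ} (hw : w ∈ H) (hw' : (w : ZMod n) = 1 + h) :
    IsBalanced n H := by
  subst hn
  have : NeZero (2 * h) := ⟨by omega⟩
  refine isBalanced_of_mem_of_forall_swap hw fun x => ?_
  have hodd := ZMod.odd_val_coe_unit_s7 (even_two_mul h) x
  have hxw : ((x * w : (ZMod (2 * h))ˣ) : ZMod (2 * h)) = x + h := by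
    rw [Units.val_mul, hw', mul_one_add, add_right_inj]
    conv_lhs => rw [← ZMod.natCast_zmod_val (x : ZMod (2 * h))]
    exact ZMod.natCast_mul_eq_self_of_odd hodd
  have hne : (x : ZMod (2 * h)).val ≠ h := fun e => Nat.not_even_iff_odd.mpr hodd (e.symm ▸ hh)
  have hlt := ZMod.val_lt (x : ZMod (2 * h))
  have hpos := hodd.pos
  have hh' : ((h : ZMod (2 * h))).val = h := ZMod.val_natCast_of_lt (by omega)
  rw [hxw]
  rcases lt_or_gt_of_ne hne with hx | hx
  · rw [ZMod.val_add_of_lt (by rw [hh']; omega), hh']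
    omega
  · have := ZMod.val_add_val_of_le (a := (x : ZMod (2 * h))) (b := h) (by rw [hh']; omega)
    omega

theorem exists_odd_one_add_two_pow_mul_pow_two_pow {c u : ℕ} (hc : 2 ≤ c) (hu : Odd u)
    (k : ℕ) :
    ∃ v, Odd v ∧ (1 + 2 ^ c * u) ^ 2 ^ k = 1 + 2 ^ (c + k) * v := by
  induction k with
  | zero => exact ⟨u, hu, by simp⟩
  | succ k ih =>
    obtain ⟨v, hv, hpow⟩ := ih
    obtain ⟨n, hn⟩ : ∃ n, c + k = n + 1 := ⟨c + k - 1, by omega⟩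
    have hsq : Even (2 ^ n * v ^ 2) := (Nat.even_pow.mpr ⟨even_two, by omega⟩).mul_right _
    refine ⟨v + 2 ^ n * v ^ 2, hv.add_even hsq, ?_⟩
    rw [pow_succ, pow_mul, hpow, ← add_assoc, hn]
    ring

theorem exists_pow_two_pow_eq_one_add_two_pow_mul {q d : ℕ} (hq : 1 < q) (hqd : q ≡ 1 [MOD d])
    (hq4 : q ≡ 1 [MOD 4]) :
    ∃ J, ∀ j ≥ J, ∃ k, (q : ZMod (2 ^ (j + 1) * d)) ^ 2 ^ k = 1 + 2 ^ j * d := by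
  obtain ⟨c, u, hu, hqu⟩ := Nat.exists_eq_two_pow_mul_odd (show q - 1 ≠ 0 by omega)
  have hq' : 1 + 2 ^ c * u = q := by omega
  have hc : 2 ≤ c := by
    have h4 : 2 ^ 2 ∣ 2 ^ c * u := hqu ▸ (Nat.modEq_iff_dvd' hq.le).mp hq4.symm
    exact (Nat.pow_dvd_pow_iff_le_right (by norm_num)).mp <|
      (Nat.Coprime.pow_left 2 (Nat.coprime_two_left.mpr hu)).dvd_of_dvd_mul_right h4
  have hd : d ≠ 0 := by
    rintro rfl
    exact hq.ne' (Nat.modEq_zero_iff.mp hqd)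
  obtain ⟨e, d', hd', rfl⟩ := Nat.exists_eq_two_pow_mul_odd hd
  refine ⟨c, fun j hj => ⟨j + e - c, ?_⟩⟩
  obtain ⟨v, hv, hqv⟩ := exists_odd_one_add_two_pow_mul_pow_two_pow hc hu (j + e - c)
  rw [show c + (j + e - c) = j + e by omega, hq'] at hqv
  -- `q ^ 2 ^ k - 1 = 2 ^ (j + e) * v` with `v` odd and divisible by `d'`: it is `2 ^ j * d` times
  -- an odd number
  have hdv : 2 ^ e * d' ∣ 2 ^ (j + e) * v := by
    have h := hqd.pow (2 ^ (j + e - c))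
    rw [hqv, one_pow] at h
    simpa using (Nat.modEq_iff_dvd' (by omega)).mp h.symm
  obtain ⟨w, rfl⟩ : d' ∣ v := by
    rw [pow_add, mul_comm (2 ^ j), mul_assoc] at hdv
    exact (Nat.Coprime.pow_right j (Nat.coprime_two_right.mpr hd')).dvd_of_dvd_mul_left
      (Nat.dvd_of_mul_dvd_mul_left (by positivity) hdv)
  rw [← Nat.cast_pow, hqv, show 2 ^ (j + 1) * (2 ^ e * d') = 2 * (2 ^ j * (2 ^ e * d')) by ring,
    show 2 ^ (j + e) * (d' * w) = w * (2 ^ j * (2 ^ e * d')) by ring, Nat.cast_add, Nat.cast_one,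
    Nat.cast_mul, ZMod.natCast_mul_eq_self_of_odd (Nat.Odd.of_mul_right hv)]
  push_cast
  rfl

theorem balanced_mod_two_pow_mul (p d : ℕ) (hp : p.Prime) (hodd : Odd p)
    (hpd : ¬ p ∣ d) (hd : 2 < d) :
    ∃ J : ℕ, ∀ j ≥ J, ∀ u : (ZMod (2 ^ j * d))ˣ,
      (u : ZMod (2 ^ j * d)) = (p : ZMod (2 ^ j * d)) →
      IsBalanced (2 ^ j * d) (Subgroup.zpowers u) := by
  have hq : 1 < (p ^ d.totient) ^ 2 :=
    Nat.one_lt_pow two_ne_zero (Nat.one_lt_pow (Nat.totient_pos.mpr (by omega)).ne' hp.one_lt)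
  have hqd : (p ^ d.totient) ^ 2 ≡ 1 [MOD d] := by
    simpa using (Nat.ModEq.pow_totient ((Nat.Prime.coprime_iff_not_dvd hp).2 hpd)).pow 2
  have hq4 : (p ^ d.totient) ^ 2 ≡ 1 [MOD 4] := by
    obtain ⟨m, hm⟩ := hodd.pow (n := d.totient)
    rw [hm, show (2 * m + 1) ^ 2 = 1 + 4 * (m ^ 2 + m) by ring]
    simp [Nat.ModEq]
  obtain ⟨J, hJ⟩ := exists_pow_two_pow_eq_one_add_two_pow_mul hq hqd hq4
  refine ⟨J + 2, fun j hj u hu => ?_⟩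
  obtain ⟨i, rfl⟩ : ∃ i, j = i + 1 := ⟨j - 1, by omega⟩
  obtain ⟨k, hk⟩ := hJ i (by omega)
  refine isBalanced_of_one_add_half_mem (h := 2 ^ i * d) (by ring)
    ((Nat.even_pow.mpr ⟨even_two, by omega⟩).mul_right d) (by positivity)
    (pow_mem (Subgroup.mem_zpowers u) (d.totient * 2 * 2 ^ k)) ?_
  rw [Units.val_pow_eq_pow_val, hu, pow_mul, pow_mul]
  push_cast at hk ⊢
  exact hk
end

section
/- Let p be an odd prime, f ≥ 1, and d a positive even integer dividing 2(p^f - 1) such that 2(p^f - 1)/d is odd and 4 | d. Then p^f ≡ d/2 + 1 (mod d), and hence the cyclic subgroup ⟨p⟩ of (ℤ/dℤ)ˣ contains d/2 + 1 and is balanced. -/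
theorem Nat.modEq_half_add_one_of_odd_div {N d : ℕ} (hdvd : d ∣ 2 * (N - 1))
    (hq : Odd (2 * (N - 1) / d)) : N ≡ d / 2 + 1 [MOD d] := by
  obtain ⟨m, hm⟩ := hq
  have hdm : 2 * (d * m) + d = 2 * (N - 1) := by
    rw [← Nat.mul_div_cancel' hdvd, hm]; ring
  -- `N = 0` would make the quotient `0`, which is even
  have hN : N = d * m + d / 2 + 1 := by
    rcases N with _ | N
    · simp at hm
    · omega
  exact ((Nat.modEq_iff_dvd' (by omega)).mpr ⟨m, by omega⟩).symm

theorem IsBalanced.of_mem_of_swap {d : ℕ} {H : Subgroup (ZMod d)ˣ} {w : (ZMod d)ˣ}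
    (hwH : w ∈ H) (hww : w * w = 1)
    (hswap : ∀ x : (ZMod d)ˣ,
      2 * (x : ZMod d).val < d ↔ d < 2 * ((x * w : (ZMod d)ˣ) : ZMod d).val) :
    IsBalanced d H := by
  intro g
  have hcoset : ∀ x : (ZMod d)ˣ, (∃ h ∈ H, x = g * h) → ∃ h ∈ H, x * w = g * h := by
    rintro x ⟨h, hh, rfl⟩
    exact ⟨h * w, mul_mem hh hwH, mul_assoc g h w⟩
  have hmul_mul : ∀ x : (ZMod d)ˣ, x * w * w = x := fun x => by rw [mul_assoc, hww, mul_one]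
  rw [← Set.ncard_image_of_injective _ (mul_left_injective w)]
  congr 1
  ext y
  rw [Set.image_mul_right, inv_eq_of_mul_eq_one_right hww]
  simp only [Set.mem_preimage, Set.mem_ofPred_eq]
  refine and_congr ⟨fun hy => by simpa only [hmul_mul] using hcoset _ hy, hcoset y⟩ ?_
  rw [hswap, hmul_mul]

namespace ZMod

variable {d : ℕ}

theorem odd_val_unit (hd : 2 ∣ d) (x : (ZMod d)ˣ) : Odd (x : ZMod d).val :=
  ((val_coe_unit_coprime x).coprime_dvd_right hd).odd_of_right

theorem half_mul_two (hd : 2 ∣ d) : ((d / 2 : ℕ) : ZMod d) * 2 = 0 := by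
  rw [show (2 : ZMod d) = (2 : ℕ) from rfl, ← Nat.cast_mul, Nat.div_mul_cancel hd, natCast_self]

variable [NeZero d]

theorem unit_mul_half (hd : 2 ∣ d) (x : (ZMod d)ˣ) :
    (x : ZMod d) * (d / 2 : ℕ) = (d / 2 : ℕ) := by
  obtain ⟨j, hj⟩ := odd_val_unit hd x
  have hx : (x : ZMod d) = 2 * j + 1 := by
    rw [← natCast_zmod_val (x : ZMod d), hj]; push_cast; ring
  linear_combination (j : ZMod d) * half_mul_two hd + hx * ((d / 2 : ℕ) : ZMod d)

theorem unit_mul_eq_add_half (hd : 2 ∣ d) {w : (ZMod d)ˣ}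
    (hw : (w : ZMod d) = (d / 2 : ℕ) + 1) (x : (ZMod d)ˣ) :
    ((x * w : (ZMod d)ˣ) : ZMod d) = x + (d / 2 : ℕ) := by
  rw [Units.val_mul, hw, mul_add, mul_one, unit_mul_half hd, add_comm]

theorem unit_mul_self_eq_one_of_eq_half_add_one (hd : 2 ∣ d) {w : (ZMod d)ˣ}
    (hw : (w : ZMod d) = (d / 2 : ℕ) + 1) : w * w = 1 := by
  ext
  rw [unit_mul_eq_add_half hd hw, hw, Units.val_one]
  linear_combination half_mul_two hd

theorem two_mul_val_lt_iff_lt_two_mul_val_add_half (hd : 2 ∣ d) {a : ZMod d}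
    (ha : a ≠ 0) : 2 * a.val < d ↔ d < 2 * (a + (d / 2 : ℕ)).val := by
  have hlt := val_lt a
  have hpos := (val_ne_zero a).mpr ha
  have hd0 := NeZero.ne d
  rw [val_add, val_natCast, Nat.mod_eq_of_lt (a := d / 2) (by omega)]
  rcases Nat.lt_or_ge (a.val + d / 2) d with h | h
  · rw [Nat.mod_eq_of_lt h]; omega
  · rw [Nat.mod_eq_sub_mod h, Nat.mod_eq_of_lt (by omega)]; omega

theorem isBalanced_of_mem_of_eq_half_add_one (hd : 2 ∣ d) {H : Subgroup (ZMod d)ˣ}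
    {w : (ZMod d)ˣ} (hwH : w ∈ H) (hw : (w : ZMod d) = (d / 2 : ℕ) + 1) : IsBalanced d H := by
  refine IsBalanced.of_mem_of_swap hwH (unit_mul_self_eq_one_of_eq_half_add_one hd hw) fun x => ?_
  have hx : (x : ZMod d) ≠ 0 := by
    rw [← val_ne_zero]; exact (odd_val_unit hd x).pos.ne'
  rw [unit_mul_eq_add_half hd hw]
  exact two_mul_val_lt_iff_lt_two_mul_val_add_half hd hx

end ZMod

theorem pf_cong_half_add_one_general (p f d : ℕ)
    (hd0 : 0 < d) (h4 : 4 ∣ d) (hdvd : d ∣ 2 * (p ^ f - 1))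
    (hq : Odd (2 * (p ^ f - 1) / d)) :
    p ^ f ≡ d / 2 + 1 [MOD d] ∧
    ∀ u : (ZMod d)ˣ, (u : ZMod d) = (p : ZMod d) →
      (∃ v ∈ Subgroup.zpowers u, (v : ZMod d) = ((d / 2 : ℕ) : ZMod d) + 1) ∧
      IsBalanced d (Subgroup.zpowers u) := by
  have hmod := Nat.modEq_half_add_one_of_odd_div hdvd hq
  refine ⟨hmod, fun u hu => ?_⟩
  have hw : ((u ^ f : (ZMod d)ˣ) : ZMod d) = ((d / 2 : ℕ) : ZMod d) + 1 := by
    rw [Units.val_pow_eq_pow_val, hu, ← Nat.cast_pow, (ZMod.natCast_eq_natCast_iff _ _ _).mpr hmod,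
      Nat.cast_add, Nat.cast_one]
  have hwH : u ^ f ∈ Subgroup.zpowers u := Subgroup.npow_mem_zpowers u f
  have : NeZero d := ⟨hd0.ne'⟩
  exact ⟨⟨u ^ f, hwH, hw⟩,
    ZMod.isBalanced_of_mem_of_eq_half_add_one (dvd_trans (by norm_num) h4) hwH hw⟩

theorem pf_cong_half_add_one (p f d : ℕ) (hp : p.Prime) (hodd : Odd p) (hf : 1 ≤ f)
    (hd0 : 0 < d) (h4 : 4 ∣ d) (hdvd : d ∣ 2 * (p ^ f - 1))
    (hq : Odd (2 * (p ^ f - 1) / d)) :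
    p ^ f ≡ d / 2 + 1 [MOD d] ∧
    ∀ u : (ZMod d)ˣ, (u : ZMod d) = (p : ZMod d) →
      (∃ v ∈ Subgroup.zpowers u, (v : ZMod d) = ((d / 2 : ℕ) : ZMod d) + 1) ∧
      IsBalanced d (Subgroup.zpowers u) :=
  pf_cong_half_add_one_general p f d hd0 h4 hdvd hq
end

section
/- Let d > 4 be an integer with 4 | d and suppose d/2 + 1 ∈ ⟨p⟩ ⊆ (ℤ/dℤ)ˣ for an odd prime p coprime to d. Then -1 ∉ ⟨p⟩ implies d does not divide p^g + 1 for any g ≥ 1; in fact, if d > 4 and d | 2(p^f-1) with odd quotient, then d ∤ p^g + 1 for all g ≥ 1. -/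
/-!
Write `d = 2n` with `n` even and let `u = p` in `ZMod d`. The odd quotient gives `u ^ f = 1 + n`,
which squares to `1` since `n ^ 2 ≡ 0`, while `u ^ g = -1`. Squares are `0` or `1` mod `4`,
so `4 ∣ p ^ g + 1` forces `g` odd, and `u ^ (f g)` is both `(1 + n) ^ g = 1 + n` and
`(-1) ^ f = ±1`. But `1 + n ≠ 1` as `n ≢ 0`, and `1 + n ≠ -1` as `0 < n + 2 < 2n` once `n > 2`.
-/

theorem pow_eq_self_of_sq_eq_one {M : Type*} [Monoid M] {x : M} (hx : x ^ 2 = 1) {g : ℕ}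
    (hg : Odd g) : x ^ g = x := by
  obtain ⟨j, rfl⟩ := hg
  rw [pow_succ, pow_mul, hx, one_pow, one_mul]

theorem Nat.not_four_dvd_sq_add_one (y : ℕ) : ¬ 4 ∣ y ^ 2 + 1 := by
  rw [← ZMod.natCast_eq_zero_iff]
  push_cast
  generalize (y : ZMod 4) = x
  revert x
  decide

theorem Nat.odd_of_four_dvd_pow_add_one {p g : ℕ} (h : 4 ∣ p ^ g + 1) : Odd g := by
  by_contra hg
  obtain ⟨j, rfl⟩ := Nat.not_odd_iff_even.mp hg
  rw [← two_mul, pow_mul'] at h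
  exact Nat.not_four_dvd_sq_add_one _ h

namespace ZMod

variable {n : ℕ}

theorem one_add_half_sq (hn : Even n) : (1 + n : ZMod (2 * n)) ^ 2 = 1 := by
  obtain ⟨m, rfl⟩ := hn
  have h0 : ((2 * (m + m) : ℕ) : ZMod (2 * (m + m))) = 0 := natCast_self _
  push_cast at h0 ⊢
  linear_combination (1 + (m : ZMod (2 * (m + m)))) * h0

theorem one_add_half_ne_one (hn : 0 < n) : (1 + n : ZMod (2 * n)) ≠ 1 := by
  intro h
  have : ((n : ℕ) : ZMod (2 * n)) = 0 := by linear_combination h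
  rw [natCast_eq_zero_iff] at this
  have := Nat.le_of_dvd hn this
  omega

theorem one_add_half_ne_neg_one (hn : 2 < n) : (1 + n : ZMod (2 * n)) ≠ -1 := by
  intro h
  have : ((n + 2 : ℕ) : ZMod (2 * n)) = 0 := by push_cast; linear_combination h
  rw [natCast_eq_zero_iff] at this
  have := Nat.le_of_dvd (by omega) this
  omega

/-- Truncated subtraction is harmless here: `x = 0` would make the quotient `0`. -/
theorem natCast_eq_one_add_half_of_odd_quotient {x : ℕ} (hdvd : 2 * n ∣ 2 * (x - 1))
    (hq : Odd (2 * (x - 1) / (2 * n))) : (x : ZMod (2 * n)) = 1 + n := by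
  obtain ⟨k, hk⟩ := hq
  have hx : x ≠ 0 := by rintro rfl; simp at hk
  have hq' := Nat.div_mul_cancel hdvd
  rw [hk] at hq'
  have hxk : x = 1 + n + 2 * n * k := by
    have : x - 1 = n * (2 * k + 1) := by linarith
    rw [← Nat.sub_add_cancel (Nat.one_le_iff_ne_zero.mpr hx), this]
    ring
  have h0 : ((2 * n : ℕ) : ZMod (2 * n)) = 0 := natCast_self _
  rw [hxk]
  push_cast at h0 ⊢
  linear_combination (k : ZMod (2 * n)) * h0

end ZMod

theorem not_dvd_pow_add_one_general (p f d : ℕ)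
    (hd : 4 < d) (h4 : 4 ∣ d) (hdvd : d ∣ 2 * (p ^ f - 1))
    (hq : Odd (2 * (p ^ f - 1) / d)) :
    ∀ g : ℕ, 1 ≤ g → ¬ d ∣ p ^ g + 1 := by
  intro g _ hdg
  have hg : Odd g := Nat.odd_of_four_dvd_pow_add_one (h4.trans hdg)
  obtain ⟨n, rfl⟩ : 2 ∣ d := (by norm_num : 2 ∣ 4).trans h4
  have hn : Even n := even_iff_two_dvd.mpr (by omega)
  have hpf : (p : ZMod (2 * n)) ^ f = 1 + n := by
    exact_mod_cast ZMod.natCast_eq_one_add_half_of_odd_quotient hdvd hq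
  have hpg : (p : ZMod (2 * n)) ^ g = -1 := by
    rw [eq_neg_iff_add_eq_zero]
    exact_mod_cast (ZMod.natCast_eq_zero_iff _ _).mpr hdg
  have key : (1 + n : ZMod (2 * n)) = (-1) ^ f :=
    calc (1 + n : ZMod (2 * n)) = (1 + n) ^ g :=
          (pow_eq_self_of_sq_eq_one (ZMod.one_add_half_sq hn) hg).symm
      _ = (p : ZMod (2 * n)) ^ (f * g) := by rw [pow_mul, hpf]
      _ = (-1) ^ f := by rw [pow_mul', hpg]
  rcases neg_one_pow_eq_or (ZMod (2 * n)) f with h | h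
  · exact ZMod.one_add_half_ne_one (by omega) (key.trans h)
  · exact ZMod.one_add_half_ne_neg_one (by omega) (key.trans h)

theorem not_dvd_pow_add_one (p f d : ℕ) (hp : p.Prime) (hodd : Odd p) (hf : 1 ≤ f)
    (hd : 4 < d) (h4 : 4 ∣ d) (hdvd : d ∣ 2 * (p ^ f - 1))
    (hq : Odd (2 * (p ^ f - 1) / d)) :
    ∀ g : ℕ, 1 ≤ g → ¬ d ∣ p ^ g + 1 :=
  not_dvd_pow_add_one_general p f d hd h4 hdvd hq
end

section
/- Let k be a finite field of odd characteristic, λ the nontrivial quadratic character of kˣ, and χ a multiplicative character of kˣ (both extended to k by sending 0 to 0). Then the Jacobi sum J(λ, χ) = Σ_{u ∈ k} λ(u)χ(-1-u) satisfies J(λ, χ) ≡ 1 (mod 2) in the ring of integers of the cyclotomic field generated by the values of χ. -/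
open scoped BigOperators

/-!
Work modulo `N = span_S {2}`, the `S`-multiples of `2`, where `S` is the ring generated by the
values of `χ`. On `kˣ` the quadratic character takes the values `±1 ≡ 1`, and `λ(0) = 0`, so `J(λ, χ) ≡ ∑_{u ≠ 0} χ(-1 - u) = ∑_v χ(v) - χ(-1)`.
The full character sum is `0` or, for trivial `χ`, `|k| - 1`, which is even since `|k|` is
odd; and `χ(-1) = ±1`, so `-χ(-1) ≡ 1`.
-/

namespace MulChar

variable {R A : Type*} [CommRing A] (S : Subring A)

theorem IsQuadratic.smodEq_one [CommMonoid R] [Nontrivial A] {lam : MulChar R A}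
    (hlam : lam.IsQuadratic) {u : R} (hu : IsUnit u) :
    lam u ≡ 1 [SMOD Submodule.span S {(2 : A)}] := by
  rw [SModEq.sub_mem, Submodule.mem_span_singleton]
  rcases hlam u with h | h | h
  · exact absurd h (hu.map lam).ne_zero
  · exact ⟨0, by rw [h, zero_smul, sub_self]⟩
  · exact ⟨-1, by rw [h, Subring.smul_def, smul_eq_mul]; push_cast; ring⟩

theorem neg_map_neg_one_smodEq_one [CommRing R] [IsDomain A] (χ : MulChar R A) :
    -χ (-1) ≡ 1 [SMOD Submodule.span S {(2 : A)}] := by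
  have hsq : χ (-1) * χ (-1) = 1 := by rw [← map_mul, neg_one_mul, neg_neg, map_one]
  rw [SModEq.sub_mem, Submodule.mem_span_singleton]
  rcases mul_self_eq_one_iff.mp hsq with h | h
  · exact ⟨-1, by rw [h, Subring.smul_def, smul_eq_mul]; push_cast; ring⟩
  · exact ⟨0, by rw [h, zero_smul]; ring⟩

variable {k : Type*} [Field k] [Fintype k]

theorem sum_smodEq_zero [IsDomain A] (hk : ringChar k ≠ 2) (χ : MulChar k A) :
    ∑ v, χ v ≡ 0 [SMOD Submodule.span S {(2 : A)}] := by
  classical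
  rw [SModEq.zero, Submodule.mem_span_singleton]
  rcases eq_or_ne χ 1 with rfl | hχ
  · obtain ⟨m, hm⟩ : Even (Fintype.card kˣ) := by
      rw [Fintype.card_units]
      exact Nat.Odd.sub_odd (Nat.odd_iff.mpr (FiniteField.odd_card_of_char_ne_two hk)) odd_one
    exact ⟨m, by rw [sum_one_eq_card_units, hm, Subring.smul_def, smul_eq_mul]; push_cast; ring⟩
  · exact ⟨0, by rw [sum_eq_zero_of_ne_one hχ, zero_smul]⟩

theorem IsQuadratic.sum_mul_smodEq {lam χ : MulChar k A} [Nontrivial A]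
    (hlam : lam.IsQuadratic) (hχS : ∀ a, χ a ∈ S) :
    ∑ u, lam u * χ (-1 - u) ≡ ∑ v, χ v - χ (-1) [SMOD Submodule.span S {(2 : A)}] := by
  classical
  have hshift : ∑ u, χ (-1 - u) = ∑ v, χ v := (Equiv.subLeft (-1 : k)).sum_comp χ
  calc ∑ u, lam u * χ (-1 - u) = ∑ u ∈ {0}ᶜ, lam u * χ (-1 - u) := by
        rw [Fintype.sum_eq_add_sum_compl 0, MulChar.map_zero, zero_mul, zero_add]
    _ ≡ ∑ u ∈ {0}ᶜ, χ (-1 - u) [SMOD Submodule.span S {(2 : A)}] := by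
        refine SModEq.sum fun u hu0 => ?_
        have hu : IsUnit u := Ne.isUnit (by simpa using hu0)
        simpa only [Subring.smul_def, smul_eq_mul, one_mul, mul_comm (χ _)] using
          (hlam.smodEq_one S hu).smul (⟨χ (-1 - u), hχS _⟩ : S)
    _ = ∑ v, χ v - χ (-1) := by
        rw [← hshift, Fintype.sum_eq_add_sum_compl 0, sub_zero, add_sub_cancel_left]

end MulChar

theorem jacobi_sum_cong_one_mod_two_general (k : Type*) [Field k] [Fintype k]
    (hchar : ringChar k ≠ 2) (lam χ : MulChar k ℂ)
    (hlam : lam.IsQuadratic) :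
    ∃ z ∈ Subring.closure (Set.range (χ : k → ℂ)),
      (∑ u : k, lam u * χ (-1 - u)) = 1 + 2 * z := by
  set S := Subring.closure (Set.range (χ : k → ℂ))
  have hχS : ∀ a, χ a ∈ S := fun a => Subring.subset_closure ⟨a, rfl⟩
  have hJ : ∑ u, lam u * χ (-1 - u) ≡ 1 [SMOD Submodule.span S {(2 : ℂ)}] := by
    simpa only [zero_add, sub_eq_add_neg] using
      ((hlam.sum_mul_smodEq S hχS).trans
        ((χ.sum_smodEq_zero S hchar).add (χ.neg_map_neg_one_smodEq_one S)))
  obtain ⟨z, hz⟩ := Submodule.mem_span_singleton.mp (SModEq.sub_mem.mp hJ)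
  refine ⟨z, z.2, ?_⟩
  rw [Subring.smul_def, smul_eq_mul] at hz
  linear_combination -hz

theorem jacobi_sum_cong_one_mod_two (k : Type*) [Field k] [Fintype k]
    (hchar : ringChar k ≠ 2) (lam χ : MulChar k ℂ)
    (hlam : lam.IsQuadratic) (hlam1 : lam ≠ 1) :
    ∃ z ∈ Subring.closure (Set.range (χ : k → ℂ)),
      (∑ u : k, lam u * χ (-1 - u)) = 1 + 2 * z :=
  jacobi_sum_cong_one_mod_two_general k hchar lam χ hlam
end

section
/- Let e ≥ 1 and let ζ be a primitive e-th root of unity in ℂ. The only roots of unity in the ring ℤ[ζ] that are congruent to 1 modulo the ideal 2ℤ[ζ] are 1 and -1. -/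
/-!
The argument works in any domain `A` in which `2` is not a unit; `ℤ[ζ]` is one because it is
integral over `ℤ` and `1/2` is not an algebraic integer. Let `ω ≡ 1 (mod 2)` satisfy
`ω ^ (2 ^ s * m) = 1` with `m` odd. If `ω ^ m = 1` but `ω ≠ 1`, then `0 = 1 + ω + ⋯ + ω ^ (m - 1) ≡ m ≡ 1`,
so `2` would be a unit; hence `ω ^ 2 ^ s = 1`. Since `ω ^ 2 ≡ 1` as well, induction on `s`
reduces to excluding `ω ^ 2 = -1`, and `(1 + 2z) ^ 2 = -1` gives `2 (2z ^ 2 + 2z + 1) = 0`,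
so again `2 ∣ 1` unless `2 = 0`, in which case `ω = 1` outright.
-/

section TwoDvdSubOne

variable {A : Type*} [CommRing A] [IsDomain A]

theorem eq_one_of_two_dvd_sub_one_of_pow_odd_eq_one (h2 : ¬IsUnit (2 : A)) {ω : A}
    (hω : 2 ∣ ω - 1) {m : ℕ} (hm : Odd m) (h : ω ^ m = 1) : ω = 1 := by
  by_contra hne
  have hgeom : ∑ i ∈ Finset.range m, ω ^ i = 0 := by
    have := geom_sum_mul ω m
    rw [h, sub_self] at this
    exact (mul_eq_zero.mp this).resolve_right (sub_ne_zero.mpr hne)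
  have hm2 : (2 : A) ∣ m := by
    have : (m : A) = -∑ i ∈ Finset.range m, (ω ^ i - 1) := by
      simp [Finset.sum_sub_distrib, hgeom]
    rw [this, dvd_neg]
    exact Finset.dvd_sum fun i _ => hω.trans (sub_one_dvd_pow_sub_one ω i)
  obtain ⟨j, rfl⟩ := hm
  push_cast at hm2
  exact h2 (isUnit_of_dvd_one ((dvd_add_right (dvd_mul_right 2 _)).mp hm2))

theorem sq_ne_neg_one_of_two_dvd_sub_one (h2 : ¬IsUnit (2 : A)) (h20 : (2 : A) ≠ 0) {ω : A}
    (hω : 2 ∣ ω - 1) : ω ^ 2 ≠ -1 := by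
  obtain ⟨z, hz⟩ := hω
  intro hsq
  have : 2 * (2 * z ^ 2 + 2 * z + 1) = 0 := by linear_combination hsq - (ω + 2 * z + 1) * hz
  refine h2 (isUnit_of_dvd_one ⟨-(z ^ 2 + z), ?_⟩)
  linear_combination (mul_eq_zero.mp this).resolve_left h20

theorem eq_one_or_eq_neg_one_of_two_dvd_sub_one_of_pow_two_pow_eq_one (h2 : ¬IsUnit (2 : A))
    {ω : A} (hω : 2 ∣ ω - 1) (s : ℕ) (h : ω ^ 2 ^ s = 1) : ω = 1 ∨ ω = -1 := by
  rcases eq_or_ne (2 : A) 0 with h20 | h20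
  · rw [h20, zero_dvd_iff, sub_eq_zero] at hω
    exact .inl hω
  induction s generalizing ω with
  | zero => exact .inl (by simpa using h)
  | succ s ih =>
    have hω2 : 2 ∣ ω ^ 2 - 1 := hω.trans (sub_one_dvd_pow_sub_one ω 2)
    rcases ih hω2 (by rw [← pow_mul, ← pow_succ']; exact h) with hsq | hsq
    · exact sq_eq_one_iff.mp hsq
    · exact absurd hsq (sq_ne_neg_one_of_two_dvd_sub_one h2 h20 hω)

theorem eq_one_or_eq_neg_one_of_two_dvd_sub_one (h2 : ¬IsUnit (2 : A)) {ω : A}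
    (hω : 2 ∣ ω - 1) {n : ℕ} (hn : n ≠ 0) (h : ω ^ n = 1) : ω = 1 ∨ ω = -1 := by
  obtain ⟨s, m, hm, rfl⟩ := Nat.exists_eq_two_pow_mul_odd hn
  have h2s : ω ^ 2 ^ s = 1 :=
    eq_one_of_two_dvd_sub_one_of_pow_odd_eq_one h2
      (hω.trans (sub_one_dvd_pow_sub_one ω _)) hm (by rw [← pow_mul, h])
  exact eq_one_or_eq_neg_one_of_two_dvd_sub_one_of_pow_two_pow_eq_one h2 hω s h2s

end TwoDvdSubOne

theorem not_isIntegral_inv_two {K : Type*} [DivisionRing K] [CharZero K] :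
    ¬IsIntegral ℤ (2⁻¹ : K) := by
  intro h
  obtain ⟨k, hk⟩ := h.exists_int_iff_exists_rat.mp ⟨2⁻¹, by push_cast; rfl⟩
  have : ((2 * k : ℤ) : K) = 1 := by push_cast; rw [← hk]; norm_num
  have : 2 * k = 1 := by exact_mod_cast this
  omega

theorem Subalgebra.not_isUnit_two {K : Type*} [DivisionRing K] [CharZero K]
    (S : Subalgebra ℤ K) [Algebra.IsIntegral ℤ S] : ¬IsUnit (2 : S) := by
  rintro ⟨u, hu⟩
  have hinv : ((u⁻¹ : Sˣ) : K) = 2⁻¹ := by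
    refine eq_inv_of_mul_eq_one_left ?_
    have := congrArg S.val u.inv_mul
    rwa [map_mul, map_one, hu, map_ofNat] at this
  apply not_isIntegral_inv_two (K := K)
  rw [← hinv]
  exact (Algebra.IsIntegral.isIntegral (R := ℤ) (u⁻¹ : Sˣ).val).map S.val

theorem roots_of_unity_cong_one_mod_two (e : ℕ) (he : 1 ≤ e) (ζ : ℂ)
    (hζ : IsPrimitiveRoot ζ e) (ω : ℂ) (hω : ω ∈ Algebra.adjoin ℤ ({ζ} : Set ℂ))
    (hru : ∃ n : ℕ, 0 < n ∧ ω ^ n = 1)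
    (hcong : ∃ z ∈ Algebra.adjoin ℤ ({ζ} : Set ℂ), ω - 1 = 2 * z) :
    ω = 1 ∨ ω = -1 := by
  set S := Algebra.adjoin ℤ ({ζ} : Set ℂ)
  have : Algebra.IsIntegral ℤ S :=
    Algebra.IsIntegral.adjoin (by simpa using hζ.isIntegral he)
  obtain ⟨n, hn, hωn⟩ := hru
  obtain ⟨z, hz, hωz⟩ := hcong
  have hS := eq_one_or_eq_neg_one_of_two_dvd_sub_one S.not_isUnit_two (ω := ⟨ω, hω⟩)
    ⟨⟨z, hz⟩, Subtype.ext hωz⟩ hn.ne' (Subtype.ext hωn)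
  simpa [Subtype.ext_iff] using hS
end

section
/- Let k be a finite field of odd order q, λ the quadratic character of kˣ, and χ a multiplicative character of kˣ of order e > 2, both with values in ℂ and extended by χ(0)=λ(0)=0. If J(λ,χ)² / q is a root of unity, then J(λ,χ)² = q. -/
open scoped BigOperators

open Polynomial

private lemma exists_int_of_rat_isIntegral {r : ℚ} (h : IsIntegral ℤ ((r : ℂ))) :
    ∃ z : ℤ, (z : ℚ) = r := by
  have h1 : IsIntegral ℤ r := by
    have e : ((r : ℂ)) = algebraMap ℚ ℂ r := (eq_ratCast (algebraMap ℚ ℂ) r).symm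
    rw [e] at h
    exact (isIntegral_algebraMap_iff (algebraMap ℚ ℂ).injective).mp h
  exact IsIntegrallyClosed.isIntegral_iff.mp h1

private lemma eta_eq_one (η : ℂ) (N : ℕ) (hN : 0 < N) (hηN : η ^ N = 1)
    (α : ℂ) (hα : α ∈ integralClosure ℤ ℂ) (hcong : η = 1 + 4 * α) : η = 1 := by
  set O := integralClosure ℤ ℂ with hO
  by_contra hne
  have hfin : IsOfFinOrder η := isOfFinOrder_iff_pow_eq_one.mpr ⟨N, hN, hηN⟩
  set d := orderOf η with hd
  have hdpos : 0 < d := hfin.orderOf_pos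
  have hprim : IsPrimitiveRoot η d := IsPrimitiveRoot.orderOf η
  have hd1 : d ≠ 1 := fun h => hne (orderOf_eq_one_iff.mp h)
  have hd2 : 2 ≤ d := by omega
  haveI : NeZero d := ⟨hdpos.ne'⟩
  have h4O : (4 : ℂ) ∈ O := by
    have : ((4:ℤ):ℂ) ∈ O := Subalgebra.algebraMap_mem O (4:ℤ)
    simpa using this
  have key : ∀ j : ℕ, ∃ β ∈ O, η ^ j = 1 + 4 * β := by
    intro j
    induction j with
    | zero => exact ⟨0, zero_mem O, by ring⟩
    | succ j ih =>
      obtain ⟨β, hβ, hβe⟩ := ih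
      refine ⟨β + α + 4 * (β * α), ?_, ?_⟩
      · exact add_mem (add_mem hβ hα) (mul_mem h4O (mul_mem hβ hα))
      · rw [pow_succ, hβe, hcong]; ring
  have hz : ∀ z ∈ primitiveRoots d ℂ, ∃ b ∈ O, 1 - z = 4 * b := by
    intro z hzmem
    have hzp : IsPrimitiveRoot z d := (mem_primitiveRoots hdpos).mp hzmem
    obtain ⟨i, _, hiz⟩ := hprim.eq_pow_of_pow_eq_one hzp.pow_eq_one
    obtain ⟨β, hβ, hβe⟩ := key i
    exact ⟨-β, neg_mem hβ, by rw [← hiz, hβe]; ring⟩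
  choose b hbO hbe using hz
  set t := (primitiveRoots d ℂ).card with ht
  have htpos : 0 < t := by
    rw [ht, hprim.card_primitiveRoots]
    exact Nat.totient_pos.mpr hdpos
  set N₀ : ℤ := (Polynomial.cyclotomic d ℤ).eval 1 with hN₀
  have hprod : (N₀ : ℂ) = ∏ z ∈ primitiveRoots d ℂ, (1 - z) := by
    have h1 : Polynomial.cyclotomic d ℂ
        = ∏ z ∈ primitiveRoots d ℂ, (Polynomial.X - Polynomial.C z) :=
      Polynomial.cyclotomic_eq_prod_X_sub_primitiveRoots hprim
    have h2 : ((Polynomial.cyclotomic d ℤ).map (Int.castRingHom ℂ)).eval 1 = ((N₀ : ℤ) : ℂ) := by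
      rw [Polynomial.eval_one_map]; simp [hN₀]
    rw [Polynomial.map_cyclotomic_int, h1] at h2
    rw [← h2, Polynomial.eval_prod]
    simp
  have hW : (N₀ : ℂ) = 4 ^ t * ∏ z ∈ (primitiveRoots d ℂ).attach, b z.1 z.2 := by
    rw [hprod, ← Finset.prod_attach _ (fun z => (1:ℂ) - z)]
    have hcg : ∏ z ∈ (primitiveRoots d ℂ).attach, ((1:ℂ) - z.1)
        = ∏ z ∈ (primitiveRoots d ℂ).attach, (4 * b z.1 z.2) :=
      Finset.prod_congr rfl (fun z _ => hbe z.1 z.2)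
    rw [hcg, Finset.prod_mul_distrib, Finset.prod_const, Finset.card_attach]
  have hWO : (∏ z ∈ (primitiveRoots d ℂ).attach, b z.1 z.2) ∈ O :=
    prod_mem (fun z _ => hbO z.1 z.2)
  have hNnz : N₀ ≠ 0 := by
    intro h0
    rw [h0] at hprod
    have := hprod.symm
    rw [Int.cast_zero, Finset.prod_eq_zero_iff] at this
    obtain ⟨z, hzmem, hz0⟩ := this
    have hzp : IsPrimitiveRoot z d := (mem_primitiveRoots hdpos).mp hzmem
    have hz1 : z = 1 := by linear_combination -hz0
    rw [hz1] at hzp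
    have hdd : d ∣ 1 := hzp.dvd_of_pow_eq_one 1 (one_pow 1)
    have := Nat.le_of_dvd one_pos hdd
    omega
  have hdvd : (4:ℤ) ^ t ∣ N₀ := by
    have h4 : ((4:ℂ)) ^ t ≠ 0 := by norm_num
    have hWr : ((((N₀ : ℚ) / 4 ^ t : ℚ)) : ℂ)
        = ∏ z ∈ (primitiveRoots d ℂ).attach, b z.1 z.2 := by
      push_cast
      rw [div_eq_iff h4]
      linear_combination hW
    rw [← hWr] at hWO
    obtain ⟨z, hz⟩ := exists_int_of_rat_isIntegral hWO
    refine ⟨z, ?_⟩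
    have hzq : (z : ℚ) * 4 ^ t = N₀ := by
      rw [hz]; field_simp
    have h2 : N₀ = z * (4 ^ t : ℤ) := by exact_mod_cast hzq.symm
    rw [h2]; ring
  have habs : ‖((N₀ : ℂ))‖ ≤ 2 ^ t := by
    rw [hprod, norm_prod]
    calc ∏ z ∈ primitiveRoots d ℂ, ‖(1 - z)‖
        ≤ ∏ _z ∈ primitiveRoots d ℂ, (2:ℝ) := by
          apply Finset.prod_le_prod (fun _ _ => norm_nonneg _)
          intro z hzmem
          have hzp : IsPrimitiveRoot z d := (mem_primitiveRoots hdpos).mp hzmem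
          have hz1 : ‖z‖ = 1 := by
            have hpow : ‖z‖ ^ d = 1 := by
              rw [← norm_pow, hzp.pow_eq_one, norm_one]
            have h0 : 0 ≤ ‖z‖ := norm_nonneg _
            rcases lt_trichotomy ‖z‖ 1 with h | h | h
            · have := pow_lt_one₀ h0 h hdpos.ne'
              exact absurd hpow (by linarith)
            · exact h
            · have := one_lt_pow₀ h hdpos.ne'
              exact absurd hpow (by linarith)
          calc ‖(1 - z)‖ ≤ ‖(1:ℂ)‖ + ‖z‖ := norm_sub_le _ _
            _ = 2 := by rw [hz1, norm_one]; norm_num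
      _ = 2 ^ t := by rw [Finset.prod_const, ht]
  have hge : ((4:ℤ) ^ t : ℤ) ≤ |N₀| :=
    Int.le_of_dvd (abs_pos.mpr hNnz) ((dvd_abs _ _).mpr hdvd)
  have habs2 : ‖((N₀ : ℂ))‖ = |(N₀ : ℝ)| := by
    rw [show ((N₀:ℂ)) = ((N₀:ℝ):ℂ) by push_cast; rfl, Complex.norm_real, Real.norm_eq_abs]
  have hle : |(N₀ : ℝ)| ≤ 2 ^ t := by rw [← habs2]; exact habs
  have hge' : (4 : ℝ) ^ t ≤ |(N₀ : ℝ)| := by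
    exact_mod_cast hge
  have hlt : (2:ℝ) ^ t < 4 ^ t := by
    apply pow_lt_pow_left₀ (by norm_num) (by norm_num) htpos.ne'
  linarith

private lemma step_div (m : ℕ) (hm : 0 < m) (μ : ℂ) (hμ : IsPrimitiveRoot μ m)
    (p : ℕ) (hp : p.Prime) (hpm : ¬ p ∣ m)
    (x : ℂ) (hx : x ∈ Algebra.adjoin ℤ {μ}) (a : ℂ) (ha : a ∈ Algebra.adjoin ℤ {μ})
    (hxa : x ^ 2 = p * a) : ∃ y ∈ Algebra.adjoin ℤ {μ}, x = p * y := by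
  haveI : Fact p.Prime := ⟨hp⟩
  have hμint : IsIntegral ℤ μ := hμ.isIntegral hm
  rw [Algebra.adjoin_singleton_eq_range_aeval] at hx ha
  obtain ⟨g, hg'⟩ := hx
  obtain ⟨h, hh'⟩ := ha
  have hg : (Polynomial.aeval μ) g = x := hg'
  have hh : (Polynomial.aeval μ) h = a := hh'
  have h0 : (Polynomial.aeval μ) (g ^ 2 - Polynomial.C (p:ℤ) * h) = 0 := by
    have he : (Polynomial.aeval μ) (g ^ 2 - Polynomial.C (p:ℤ) * h) = x ^ 2 - (p:ℂ) * a := by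
      rw [map_sub, map_mul, map_pow, hg, hh, aeval_C]
      norm_num
    rw [he, hxa, sub_self]
  have hdvd : Polynomial.cyclotomic m ℤ ∣ g ^ 2 - Polynomial.C (p:ℤ) * h := by
    rw [Polynomial.cyclotomic_eq_minpoly hμ hm]
    exact minpoly.isIntegrallyClosed_dvd hμint h0
  set φ := Int.castRingHom (ZMod p) with hφ
  have hmap : Polynomial.cyclotomic m (ZMod p) ∣ (g.map φ) ^ 2 := by
    have h1 := Polynomial.map_dvd φ hdvd
    rw [Polynomial.map_cyclotomic_int] at h1
    rw [Polynomial.map_sub, Polynomial.map_mul, Polynomial.map_pow, Polynomial.map_C] at h1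
    have hC : φ ((p:ℤ)) = 0 := by
      simp [hφ]
    rw [hC, Polynomial.C_0, zero_mul, sub_zero] at h1
    exact h1
  have hsq : Squarefree (Polynomial.cyclotomic m (ZMod p)) := by
    have hm0 : ((m : ZMod p)) ≠ 0 := by
      rw [Ne, ZMod.natCast_eq_zero_iff]
      exact hpm
    have hsep : ((Polynomial.X : (ZMod p)[X]) ^ m - 1).Separable :=
      Polynomial.X_pow_sub_one_separable_iff.mpr hm0
    exact hsep.squarefree.squarefree_of_dvd (Polynomial.cyclotomic.dvd_X_pow_sub_one m (ZMod p))
  have hgdvd : Polynomial.cyclotomic m (ZMod p) ∣ g.map φ :=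
    (hsq.dvd_pow_iff_dvd two_ne_zero).mp hmap
  obtain ⟨s₀, hs₀⟩ := hgdvd
  obtain ⟨s, hs⟩ := Polynomial.map_surjective φ ZMod.intCast_surjective s₀
  have hker : (g - Polynomial.cyclotomic m ℤ * s).map φ = 0 := by
    rw [Polynomial.map_sub, Polynomial.map_mul, Polynomial.map_cyclotomic_int, hs, ← hs₀]
    ring
  have hcoeff : ∀ i, (p:ℤ) ∣ (g - Polynomial.cyclotomic m ℤ * s).coeff i := by
    intro i
    have := congrArg (fun q => Polynomial.coeff q i) hker
    simp only [Polynomial.coeff_map, Polynomial.coeff_zero] at this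
    rwa [hφ, Int.coe_castRingHom, ZMod.intCast_zmod_eq_zero_iff_dvd] at this
  obtain ⟨u, hu⟩ := (Polynomial.C_dvd_iff_dvd_coeff _ _).mpr hcoeff
  refine ⟨(Polynomial.aeval μ) u, ?_, ?_⟩
  · rw [Algebra.adjoin_singleton_eq_range_aeval]
    exact ⟨u, rfl⟩
  have hcyc0 : (Polynomial.aeval μ) (Polynomial.cyclotomic m ℤ) = 0 := by
    rw [Polynomial.cyclotomic_eq_minpoly hμ hm]
    exact minpoly.aeval ℤ μ
  have : g = Polynomial.cyclotomic m ℤ * s + Polynomial.C (p:ℤ) * u := by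
    rw [← hu]; ring
  rw [← hg, this, map_add, map_mul, map_mul, hcyc0, zero_mul, zero_add, aeval_C]
  norm_num

private lemma no_sqrt_neg_p_pow (m : ℕ) (hm : 0 < m) (μ : ℂ) (hμ : IsPrimitiveRoot μ m)
    (p : ℕ) (hp : p.Prime) (hpm : ¬ p ∣ m) :
    ∀ j : ℕ, ∀ x ∈ Algebra.adjoin ℤ {μ}, x ^ 2 = -((p:ℂ)) ^ (2*j+1) → False := by
  have hpne : ((p:ℂ)) ≠ 0 := Nat.cast_ne_zero.mpr hp.pos.ne'
  intro j
  induction j with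
  | zero =>
    intro x hx hx2
    obtain ⟨y, hy, hxy⟩ := step_div m hm μ hμ p hp hpm x hx (-1)
      (neg_mem (one_mem _)) (by rw [hx2]; norm_num)
    have h2 : (p:ℂ) * ((p:ℂ) * y ^ 2) = (p:ℂ) * (-1) := by
      rw [← mul_assoc, show (p:ℂ) * (p:ℂ) * y^2 = ((p:ℂ)*y)^2 by ring, ← hxy, hx2]
      ring
    have h3 : (p:ℂ) * y ^ 2 = -1 := mul_left_cancel₀ hpne h2
    have hadj : Algebra.adjoin ℤ {μ} ≤ integralClosure ℤ ℂ := by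
      rw [Algebra.adjoin_le_iff]
      intro z hz
      rw [Set.mem_singleton_iff] at hz
      rw [hz]
      exact hμ.isIntegral hm
    have hyint : IsIntegral ℤ (y ^ 2) := (hadj (pow_mem hy 2))
    have hy2q : y ^ 2 = (((-1 / p : ℚ)) : ℂ) := by
      have hc : (((-1 / p : ℚ)) : ℂ) = -1 / (p:ℂ) := by push_cast; ring
      rw [hc, eq_div_iff hpne]
      linear_combination h3
    rw [hy2q] at hyint
    obtain ⟨z, hz⟩ := exists_int_of_rat_isIntegral hyint
    have hpq : ((p:ℚ)) ≠ 0 := Nat.cast_ne_zero.mpr hp.pos.ne'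
    have hzp : (z : ℚ) * p = -1 := by
      rw [hz, div_mul_cancel₀ _ hpq]
    have hzpz : z * (p:ℤ) = -1 := by exact_mod_cast hzp
    have : (p:ℤ) ∣ 1 := ⟨-z, by linarith⟩
    have := Int.le_of_dvd one_pos this
    have := hp.two_le
    omega
  | succ j ih =>
    intro x hx hx2
    obtain ⟨y, hy, hxy⟩ := step_div m hm μ hμ p hp hpm x hx (-((p:ℂ)) ^ (2*j+2))
      (neg_mem (pow_mem (natCast_mem _ p) _))
      (by rw [hx2, show 2*(j+1)+1 = (2*j+2)+1 by ring, pow_succ]; ring)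
    apply ih y hy
    have h2 : (p:ℂ)^2 * y ^ 2 = (p:ℂ)^2 * (-((p:ℂ)) ^ (2*j+1)) := by
      rw [show (p:ℂ)^2 * y^2 = ((p:ℂ)*y)^2 by ring, ← hxy, hx2,
        show 2*(j+1)+1 = (2*j+1)+2 by ring, pow_add]
      ring
    exact mul_left_cancel₀ (pow_ne_zero 2 hpne) h2

theorem jacobi_sum_sq_eq_q (k : Type*) [Field k] [Fintype k]
    (hodd : Odd (Fintype.card k)) (lam χ : MulChar k ℂ)
    (hlam : lam.IsQuadratic) (hlam1 : lam ≠ 1)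
    (e : ℕ) (he : orderOf χ = e) (he2 : 2 < e)
    (hru : ∃ n : ℕ, 0 < n ∧
      (((∑ u : k, lam u * χ (-1 - u)) ^ 2) / (Fintype.card k : ℂ)) ^ n = 1) :
    (∑ u : k, lam u * χ (-1 - u)) ^ 2 = (Fintype.card k : ℂ) := by
  classical
  set q := Fintype.card k with hq
  have hq2 : 2 ≤ q := Fintype.one_lt_card
  have hχ1 : χ ≠ 1 := by
    intro h; rw [h, orderOf_one] at he; omega
  have he0 : e ≠ 0 := by omega
  have hχq : χ ^ (q - 1) = 1 := by
    ext a
    rw [MulChar.pow_apply_coe, MulChar.one_apply_coe]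
    have ha : ((a : k)) ^ (q - 1) = 1 :=
      FiniteField.pow_card_sub_one_eq_one _ a.ne_zero
    rw [← map_pow, ha, map_one]
  have hedvd : e ∣ q - 1 := he ▸ orderOf_dvd_of_pow_eq_one hχq
  obtain ⟨p, _, f, hp, hcard⟩ := FiniteField.card' k
  rw [← hq] at hcard
  have hqodd : q % 2 = 1 := Nat.odd_iff.mp hodd
  have hfne : (f : ℕ) ≠ 0 := f.pos.ne'
  have hpq : p ∣ q := by rw [hcard]; exact dvd_pow_self p hfne
  have hp2 : p ≠ 2 := by
    intro h
    rw [h] at hpq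
    omega
  have hpodd : Odd p := hp.odd_of_ne_two hp2
  set m := 2 * e with hm'
  have hm : 0 < m := by omega
  have hpm : ¬ p ∣ m := by
    intro hdvd
    rcases (Nat.Prime.dvd_mul hp).mp hdvd with h2 | hpe
    · exact hp2 ((Nat.prime_dvd_prime_iff_eq hp Nat.prime_two).mp h2)
    · have h1 : p ∣ q - 1 := hpe.trans hedvd
      have h2 : p ∣ q - (q - 1) := Nat.dvd_sub hpq h1
      have h3 : q - (q - 1) = 1 := by omega
      rw [h3] at h2
      have := Nat.le_of_dvd one_pos h2
      have := hp.two_le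
      omega
  set μ := Complex.exp (2 * Real.pi * Complex.I / m) with hμdef
  have hμ : IsPrimitiveRoot μ m := Complex.isPrimitiveRoot_exp m hm.ne'
  haveI : NeZero m := ⟨hm.ne'⟩
  set A := Algebra.adjoin ℤ {μ} with hA
  have hAint : ∀ x ∈ A, IsIntegral ℤ x := by
    intro x hx
    have hadj : A ≤ integralClosure ℤ ℂ := by
      rw [hA, Algebra.adjoin_le_iff]
      intro z hz
      rw [Set.mem_singleton_iff] at hz
      rw [hz]
      exact hμ.isIntegral hm
    exact hadj hx
  have hχA : ∀ x : k, χ x ∈ A := by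
    intro x
    by_cases hx : IsUnit x
    · have hχe : χ ^ e = 1 := by rw [← he]; exact pow_orderOf_eq_one χ
      have h1 : (χ x) ^ e = 1 := by
        rw [← MulChar.pow_apply' χ he0 x, hχe, MulChar.one_apply hx]
      have hpow : (χ x) ^ m = 1 := by
        rw [hm', mul_comm 2 e, pow_mul, h1, one_pow]
      obtain ⟨i, _, hi⟩ := hμ.eq_pow_of_pow_eq_one hpow
      rw [← hi]
      exact pow_mem (Algebra.subset_adjoin (Set.mem_singleton μ)) i
    · rw [MulChar.map_nonunit χ hx]
      exact zero_mem A
  have hlamA : ∀ x : k, lam x ∈ A := by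
    intro x
    rcases hlam x with h | h | h <;> rw [h]
    · exact zero_mem A
    · exact one_mem A
    · exact neg_mem (one_mem A)
  set S := ∑ u : k, lam u * χ (-1 - u) with hS
  have hSA : S ∈ A := sum_mem (fun u _ => mul_mem (hlamA u) (hχA _))
  set c₀ := χ (-1) with hc₀def
  have hc₀sq : c₀ ^ 2 = 1 := by
    rw [hc₀def, ← map_pow, neg_one_sq, map_one]
  have hc₀A : c₀ ∈ A := hχA (-1)
  have hsum0 : ∑ v : k, χ v = 0 := MulChar.sum_eq_zero_of_ne_one hχ1
  have hsplit : ∀ (g : k → ℂ), ∑ u : k, g u = ∑ u ∈ Finset.univ \ {(0:k)}, g u + g 0 :=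
    fun g => Finset.sum_eq_sum_sdiff_singleton_add (Finset.mem_univ 0) g
  have hS0 : S = ∑ u ∈ Finset.univ \ {(0:k)}, lam u * χ (-1 - u) := by
    rw [hS, hsplit (fun u => lam u * χ (-1 - u))]
    rw [MulChar.map_nonunit lam not_isUnit_zero, zero_mul, add_zero]
  have hfull : ∑ u : k, χ (-1 - u) = 0 := by
    have heq := Fintype.sum_equiv (Equiv.subLeft (-1:k)) (fun u => χ (-1 - u)) (fun v => χ v)
      (fun u => by simp)
    exact heq.trans hsum0
  have hsum1 : ∑ u ∈ Finset.univ \ {(0:k)}, χ (-1 - u) = -c₀ := by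
    have h1 := hsplit (fun u => χ (-1 - u))
    rw [hfull] at h1
    have h00 : χ (-1 - (0:k)) = c₀ := by rw [sub_zero, hc₀def]
    rw [h00] at h1
    linear_combination -h1
  set B := ∑ u ∈ Finset.univ \ {(0:k)}, (if lam u = 1 then (0:ℂ) else -1) * χ (-1 - u) with hB
  have hBA : B ∈ A := by
    apply sum_mem
    intro u _
    refine mul_mem ?_ (hχA _)
    split_ifs
    · exact zero_mem A
    · exact neg_mem (one_mem A)
  have hSB : S = 2 * B - c₀ := by
    rw [hS0]
    have hterm : ∀ u ∈ Finset.univ \ {(0:k)}, lam u * χ (-1 - u)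
        = 2 * ((if lam u = 1 then (0:ℂ) else -1) * χ (-1 - u)) + χ (-1 - u) := by
      intro u hu
      have hu0 : u ≠ 0 := by simpa using (Finset.mem_sdiff.mp hu).2
      have hlamu : lam u = 1 ∨ lam u = -1 := by
        rcases hlam u with h | h | h
        · exfalso
          have h1 : lam u * lam u⁻¹ = 1 := by
            rw [← map_mul, mul_inv_cancel₀ hu0, map_one]
          rw [h, zero_mul] at h1
          exact zero_ne_one h1
        · exact Or.inl h
        · exact Or.inr h
      rcases hlamu with h | h
      · rw [h, if_pos rfl]; ring
      · rw [h, if_neg (by norm_num : (-1:ℂ) ≠ 1)]; ring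
    rw [Finset.sum_congr rfl hterm, Finset.sum_add_distrib, hsum1, ← Finset.mul_sum, ← hB]
    ring
  set a := B ^ 2 - c₀ * B with ha
  have haA : a ∈ A := sub_mem (pow_mem hBA 2) (mul_mem hc₀A hBA)
  have hS2 : S ^ 2 = 1 + 4 * a := by
    rw [hSB, ha]
    linear_combination hc₀sq
  obtain ⟨n, hn, hζn⟩ := hru
  have hq0 : ((q:ℂ)) ≠ 0 := Nat.cast_ne_zero.mpr (by omega)
  set ζ := S ^ 2 / (q:ℂ) with hζdef
  have hζq : ζ * q = S ^ 2 := div_mul_cancel₀ _ hq0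
  have hζint : ζ ∈ integralClosure ℤ ℂ := by
    refine ⟨Polynomial.X ^ n - 1, Polynomial.monic_X_pow_sub_C 1 hn.ne', ?_⟩
    simp only [eval₂_sub, eval₂_X_pow, eval₂_one]
    rw [hζn]  -- ζ ^ n - 1 = 0
    ring
  have hq4 : q % 4 = 1 ∨ q % 4 = 3 := by omega
  obtain ⟨uu, vv, huv⟩ := (Int.isCoprime_iff_gcd_eq_one.mpr (by
    have hcop2 : Nat.Coprime q 2 :=
      ((Nat.Prime.coprime_iff_not_dvd Nat.prime_two).mpr (by omega)).symm
    have hcop4 : Nat.Coprime q 4 := by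
      have := hcop2.pow_right 2
      norm_num at this
      exact this
    have hg : Int.gcd ((q:ℤ)) ((4:ℕ):ℤ) = Nat.gcd q 4 := Int.gcd_natCast_natCast q 4
    norm_num at hg
    rw [hg]
    exact hcop4) : IsCoprime ((q:ℤ)) 4)
  have key : ∀ c : ℤ, ((c:ℂ))^2 = 1 →
      (∀ w, w ∈ integralClosure ℤ ℂ → (q:ℂ) * ((c:ℂ) * ζ - 1) = 4 * w → ((c:ℂ)) * ζ = 1) := by
    intro c hc2 w hw hqw
    have hη : ((c:ℂ) * ζ) ^ (2 * n) = 1 := by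
      have hζ2n : ζ ^ (2*n) = 1 := by rw [show 2*n = n*2 by ring, pow_mul, hζn, one_pow]
      have hc2n : ((c:ℂ))^(2*n) = 1 := by rw [pow_mul, hc2, one_pow]
      rw [mul_pow, hζ2n, hc2n, mul_one]
    have hηO : (c:ℂ) * ζ ∈ integralClosure ℤ ℂ := by
      refine mul_mem ?_ hζint
      have : algebraMap ℤ ℂ c ∈ integralClosure ℤ ℂ := Subalgebra.algebraMap_mem _ c
      simpa using this
    have hcast : ((uu:ℂ)) * q + (vv:ℂ) * 4 = 1 := by exact_mod_cast congrArg (Int.cast : ℤ → ℂ) huv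
    have hαO : (uu:ℂ) * w + (vv:ℂ) * ((c:ℂ) * ζ - 1) ∈ integralClosure ℤ ℂ := by
      refine add_mem (mul_mem ?_ hw) (mul_mem ?_ (sub_mem hηO (one_mem _)))
      · simpa using Subalgebra.algebraMap_mem (integralClosure ℤ ℂ) uu
      · simpa using Subalgebra.algebraMap_mem (integralClosure ℤ ℂ) vv
    refine eta_eq_one ((c:ℂ) * ζ) (2 * n) (by omega) hη _ hαO ?_
    linear_combination (uu:ℂ) * hqw - ((c:ℂ)*ζ - 1) * hcast
  rcases hq4 with hc1 | hc3
  · -- q ≡ 1 mod 4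
    have hqr : q = 4 * (q / 4) + 1 := by omega
    have hw : (q:ℂ) * ((1:ℂ) * ζ - 1) = 4 * (a - (q/4 : ℕ)) := by
      have hqc : ((q:ℂ)) = 4 * ((q/4 : ℕ) : ℂ) + 1 := by exact_mod_cast congrArg (Nat.cast : ℕ → ℂ) hqr
      linear_combination hζq + hS2 - hqc
    have h1 : ((1:ℤ):ℂ) * ζ = 1 := by
      refine key 1 (by norm_num) (a - (q/4 : ℕ)) ?_ ?_
      · exact sub_mem (hAint a haA) (by simpa using Subalgebra.algebraMap_mem (integralClosure ℤ ℂ) ((q/4 : ℕ) : ℤ))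
      · exact_mod_cast hw
    have hζ1 : ζ = 1 := by
      norm_num at h1
      exact h1
    rw [← hζq, hζ1, one_mul]
  · -- q ≡ 3 mod 4
    have hqr : q = 4 * (q / 4) + 3 := by omega
    have hw : (q:ℂ) * (((-1:ℤ):ℂ) * ζ - 1) = 4 * (-a - (q/4 : ℕ) - 1) := by
      have hqc : ((q:ℂ)) = 4 * ((q/4 : ℕ) : ℂ) + 3 := by exact_mod_cast congrArg (Nat.cast : ℕ → ℂ) hqr
      push_cast
      linear_combination -hζq - hS2 - hqc
    have h1 : ((-1:ℤ):ℂ) * ζ = 1 := by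
      refine key (-1) (by norm_num) (-a - (q/4 : ℕ) - 1) ?_ hw
      exact sub_mem (sub_mem (neg_mem (hAint a haA))
        (by simpa using Subalgebra.algebraMap_mem (integralClosure ℤ ℂ) ((q/4 : ℕ) : ℤ))) (one_mem _)
    have hζneg : ζ = -1 := by
      norm_num at h1
      linear_combination -h1
    have hS2neg : S ^ 2 = -(q:ℂ) := by
      rw [← hζq, hζneg]
      ring
    exfalso
    have hfodd : Odd (f:ℕ) := by
      by_contra hev
      rw [Nat.not_odd_iff_even] at hev
      obtain ⟨g, hg⟩ := hev
      have hpg : Odd (p ^ g) := hpodd.pow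
      obtain ⟨s, hs⟩ := hpg
      have hqs : q = 4*(s*s+s)+1 := by
        have h1 : q = (2*s+1)^2 := by
          rw [hcard, hg, ← hs]
          ring
        rw [h1]; ring
      have h41 : q % 4 = 1 := by
        rw [hqs, add_comm]
        simp [Nat.add_mul_mod_self_left]
      omega
    obtain ⟨j, hj⟩ := hfodd
    refine no_sqrt_neg_p_pow m hm μ hμ p hp hpm j S hSA ?_
    rw [hS2neg]
    have : ((q:ℂ)) = ((p:ℂ)) ^ (2*j+1) := by
      rw [← hj, hcard]
      push_cast
      ring
    rw [this]
end

section
/- Let p be an odd prime, f ≥ 1, d = 2(p^f - 1), q ≡ 1 (mod d) a power of p, and K = F_q(u) with u^d = t. The point R(u) = (u^{-2}, u^{-3}(u² + 1)^{(p^f+1)/2}) lies on the elliptic curve E: y² = x(x+1)(x+t) over K. -/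
/-!
Squaring the `y`-coordinate gives `u⁻⁶ (u² + 1) (u² + 1)^{p^f}`, and in characteristic `p` the
Frobenius turns `(u² + 1)^{p^f}` into `u^{2p^f} + 1 = u^{d+2} + 1`. Clearing the powers of `u⁻¹`,
this is exactly `x (x + 1) (x + u^d)` at `x = u⁻²`.
-/

theorem sq_pow_three_mul_pow_half {M : Type*} [CommMonoid M] (a b : M) {n : ℕ} (hn : Odd n) :
    (a ^ 3 * b ^ ((n + 1) / 2)) ^ 2 = a ^ 6 * (b * b ^ n) := by
  rw [mul_pow, ← pow_mul, ← pow_mul, Nat.div_mul_cancel hn.add_one.two_dvd, pow_succ' b n]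

section LegendrePoint

variable {F : Type*} [Field F]

theorem legendre_rhs_eq (x : F) (d : ℕ) :
    x⁻¹ ^ 2 * (x⁻¹ ^ 2 + 1) * (x⁻¹ ^ 2 + x ^ d) = x⁻¹ ^ 6 * ((x ^ 2 + 1) * (x ^ (d + 2) + 1)) := by
  rcases eq_or_ne x 0 with rfl | hx
  · simp
  · field_simp
    ring

theorem legendre_point_sq_eq (p : ℕ) [Fact p.Prime] [CharP F p] (hp : Odd p) (f : ℕ) (x : F) :
    (x⁻¹ ^ 3 * (x ^ 2 + 1) ^ ((p ^ f + 1) / 2)) ^ 2 =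
      x⁻¹ ^ 2 * (x⁻¹ ^ 2 + 1) * (x⁻¹ ^ 2 + x ^ (2 * (p ^ f - 1))) := by
  have hfrob : (x ^ 2 + 1) ^ p ^ f = x ^ (2 * (p ^ f - 1) + 2) + 1 := by
    have hpf : 1 ≤ p ^ f := Nat.one_le_pow _ _ (Fact.out : p.Prime).pos
    rw [add_pow_char_pow, one_pow, ← pow_mul]
    congr 2
    omega
  rw [sq_pow_three_mul_pow_half _ _ hp.pow, hfrob, legendre_rhs_eq]

end LegendrePoint

theorem point_on_legendre_curve_general (p f d : ℕ) (hp : p.Prime) (hodd : Odd p)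
    (hd : d = 2 * (p ^ f - 1))
    (K0 : Type*) [Field K0] [CharP K0 p] :
    ((RatFunc.X : RatFunc K0)⁻¹ ^ 3 *
        ((RatFunc.X : RatFunc K0) ^ 2 + 1) ^ ((p ^ f + 1) / 2)) ^ 2 =
      (RatFunc.X : RatFunc K0)⁻¹ ^ 2 *
        ((RatFunc.X : RatFunc K0)⁻¹ ^ 2 + 1) *
        ((RatFunc.X : RatFunc K0)⁻¹ ^ 2 + (RatFunc.X : RatFunc K0) ^ d) := by
  have : Fact p.Prime := ⟨hp⟩
  subst hd
  exact legendre_point_sq_eq p hodd f _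

theorem point_on_legendre_curve (p f q d : ℕ) (hp : p.Prime) (hodd : Odd p)
    (hf : 1 ≤ f) (hd : d = 2 * (p ^ f - 1))
    (hq : ∃ m : ℕ, 0 < m ∧ q = p ^ m) (hqd : q % d = 1)
    (K0 : Type*) [Field K0] [Fintype K0] [CharP K0 p] (hcard : Fintype.card K0 = q) :
    ((RatFunc.X : RatFunc K0)⁻¹ ^ 3 *
        ((RatFunc.X : RatFunc K0) ^ 2 + 1) ^ ((p ^ f + 1) / 2)) ^ 2 =
      (RatFunc.X : RatFunc K0)⁻¹ ^ 2 *
        ((RatFunc.X : RatFunc K0)⁻¹ ^ 2 + 1) *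
        ((RatFunc.X : RatFunc K0)⁻¹ ^ 2 + (RatFunc.X : RatFunc K0) ^ d) :=
  point_on_legendre_curve_general p f d hp hodd hd K0
end

section
/- Let d > 2 with 4 | d, and suppose p is an odd prime coprime to d such that some power of p is congruent to d/2 + 1 modulo d. Then for every odd divisor e of d, the cyclic subgroup ⟨p⟩ of (ℤ/(d/e)ℤ)ˣ is balanced, provided d/e > 2 and 4 | (d/e). -/
/-!
Multiplication by `t = m/2 + 1` in `ZMod m` sends an odd residue `x` to `x + m/2`, and every
unit is odd when `m` is even. When moreover `4 ∣ m`, no unit sits at `m/2`, so right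
multiplication by `t` exchanges the units below `m/2` with those above it. If `t` lies in `H`,
this map preserves every coset of `H`, which is therefore balanced. For an odd divisor `e` of `d`,
the congruence `p ^ n ≡ d/2 + 1 (mod d)` reduces to `p ^ n ≡ (d/e)/2 + 1 (mod d/e)`, since
`d/2 = e * ((d/e)/2)` and `e * ((d/e)/2) ≡ (d/e)/2 (mod d/e)` for odd `e`.
-/

lemma Nat.mul_odd_div_two_modEq {m e : ℕ} (hm : 2 ∣ m) (he : Odd e) :
    m * e / 2 ≡ m / 2 [MOD m] := by
  obtain ⟨w, rfl⟩ := hm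
  obtain ⟨j, rfl⟩ := he
  have hw : 2 * w * (2 * j + 1) / 2 = w + j * (2 * w) := by
    rw [show 2 * w * (2 * j + 1) = 2 * (w + j * (2 * w)) by ring, Nat.mul_div_cancel_left _ two_pos]
  rw [hw, Nat.mul_div_cancel_left _ two_pos]
  exact Nat.add_mul_mod_self_right w j (2 * w)

lemma ZMod.odd_val_coe_unit_s18 {m : ℕ} (hm : 2 ∣ m) (x : (ZMod m)ˣ) : Odd (x : ZMod m).val :=
  Nat.coprime_two_right.mp ((ZMod.val_coe_unit_coprime x).coprime_dvd_right hm)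

lemma ZMod.val_unit_mul_half_add_one {m : ℕ} [NeZero m] (hm : 2 ∣ m) (x : (ZMod m)ˣ) :
    ((x : ZMod m) * ((m / 2 + 1 : ℕ) : ZMod m)).val = ((x : ZMod m).val + m / 2) % m := by
  obtain ⟨k, hk⟩ := ZMod.odd_val_coe_unit_s18 hm x
  obtain ⟨w, rfl⟩ := hm
  have hx : (x : ZMod (2 * w)) = ((2 * k + 1 : ℕ) : ZMod (2 * w)) := by
    rw [← hk, ZMod.natCast_zmod_val]
  rw [hk, hx, ← Nat.cast_mul, ZMod.val_natCast, Nat.mul_div_cancel_left _ two_pos,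
    show (2 * k + 1) * (w + 1) = 2 * k + 1 + w + k * (2 * w) by ring, Nat.add_mul_mod_self_right]

lemma Nat.two_mul_add_half_mod_lt_iff {v m : ℕ} (hv : v < m) (hm : 2 ∣ m) :
    2 * ((v + m / 2) % m) < m ↔ m ≤ 2 * v := by
  rw [Nat.add_mod_eq_ite, Nat.mod_eq_of_lt hv, Nat.mod_eq_of_lt (by omega)]
  split_ifs <;> omega

lemma Nat.lt_two_mul_add_half_mod_iff {v m : ℕ} (hv0 : 0 < v) (hv : v < m) (hm : 2 ∣ m) :
    m < 2 * ((v + m / 2) % m) ↔ 2 * v < m := by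
  rw [Nat.add_mod_eq_ite, Nat.mod_eq_of_lt hv, Nat.mod_eq_of_lt (by omega)]
  split_ifs <;> omega

lemma ZMod.two_mul_val_unit_ne_s18 {m : ℕ} (hm : 4 ∣ m) (x : (ZMod m)ˣ) :
    2 * (x : ZMod m).val ≠ m := by
  obtain ⟨k, hk⟩ := ZMod.odd_val_coe_unit_s18 (dvd_trans ⟨2, rfl⟩ hm) x
  omega

lemma ZMod.two_mul_val_unit_mul_half_add_one_lt_iff {m : ℕ} [NeZero m] (hm : 4 ∣ m)
    (x : (ZMod m)ˣ) :
    2 * ((x : ZMod m) * ((m / 2 + 1 : ℕ) : ZMod m)).val < m ↔ m < 2 * (x : ZMod m).val := by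
  have h2 : 2 ∣ m := dvd_trans ⟨2, rfl⟩ hm
  rw [ZMod.val_unit_mul_half_add_one h2, Nat.two_mul_add_half_mod_lt_iff (ZMod.val_lt _) h2]
  have := ZMod.two_mul_val_unit_ne_s18 hm x
  omega

lemma ZMod.lt_two_mul_val_unit_mul_half_add_one_iff {m : ℕ} [NeZero m] (hm : 4 ∣ m)
    (x : (ZMod m)ˣ) :
    m < 2 * ((x : ZMod m) * ((m / 2 + 1 : ℕ) : ZMod m)).val ↔ 2 * (x : ZMod m).val < m := by
  have h2 : 2 ∣ m := dvd_trans ⟨2, rfl⟩ hm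
  obtain ⟨k, hk⟩ := ZMod.odd_val_coe_unit_s18 h2 x
  rw [ZMod.val_unit_mul_half_add_one h2,
    Nat.lt_two_mul_add_half_mod_iff (by omega) (ZMod.val_lt _) h2]

lemma isBalanced_of_half_add_one_mem {m : ℕ} [NeZero m] (hm : 4 ∣ m) {H : Subgroup (ZMod m)ˣ}
    {t : (ZMod m)ˣ} (htH : t ∈ H) (ht : (t : ZMod m) = ((m / 2 + 1 : ℕ) : ZMod m)) :
    IsBalanced m H := by
  intro g
  have hcoset : ∀ x, (∃ h ∈ H, x = g * h) → ∃ h ∈ H, x * t = g * h := by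
    rintro _ ⟨h, hh, rfl⟩
    exact ⟨h * t, mul_mem hh htH, mul_assoc _ _ _⟩
  apply le_antisymm
  · refine Set.ncard_le_ncard_of_injOn (· * t) ?_ (mul_left_injective t).injOn (Set.toFinite _)
    rintro x ⟨hx, hlt⟩
    refine ⟨hcoset x hx, ?_⟩
    rwa [Units.val_mul, ht, ZMod.lt_two_mul_val_unit_mul_half_add_one_iff hm]
  · refine Set.ncard_le_ncard_of_injOn (· * t) ?_ (mul_left_injective t).injOn (Set.toFinite _)
    rintro x ⟨hx, hlt⟩
    refine ⟨hcoset x hx, ?_⟩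
    rwa [Units.val_mul, ht, ZMod.two_mul_val_unit_mul_half_add_one_lt_iff hm]

theorem balanced_mod_quotient_general (d p : ℕ)
    (hpow : ∃ g : ℕ, p ^ g ≡ d / 2 + 1 [MOD d]) :
    ∀ e : ℕ, Odd e → e ∣ d → 2 < d / e → 4 ∣ d / e →
      ∀ u : (ZMod (d / e))ˣ, (u : ZMod (d / e)) = (p : ZMod (d / e)) →
        IsBalanced (d / e) (Subgroup.zpowers u) := by
  obtain ⟨n, hn⟩ := hpow
  intro e he hed hm h4m u hu
  have : NeZero (d / e) := ⟨by omega⟩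
  have hcong : p ^ n ≡ d / e / 2 + 1 [MOD d / e] := by
    refine (hn.of_dvd (Nat.div_dvd_of_dvd hed)).trans (Nat.ModEq.add_right 1 ?_)
    conv_lhs => rw [← Nat.div_mul_cancel hed]
    exact Nat.mul_odd_div_two_modEq (dvd_trans ⟨2, rfl⟩ h4m) he
  refine isBalanced_of_half_add_one_mem h4m (Subgroup.npow_mem_zpowers u n) ?_
  rwa [Units.val_pow_eq_pow_val, hu, ← Nat.cast_pow, ZMod.natCast_eq_natCast_iff]

theorem balanced_mod_quotient (d p : ℕ) (hd : 2 < d) (h4 : 4 ∣ d) (hp : p.Prime)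
    (hodd : Odd p) (hcop : Nat.Coprime p d)
    (hpow : ∃ g : ℕ, p ^ g ≡ d / 2 + 1 [MOD d]) :
    ∀ e : ℕ, Odd e → e ∣ d → 2 < d / e → 4 ∣ d / e →
      ∀ u : (ZMod (d / e))ˣ, (u : ZMod (d / e)) = (p : ZMod (d / e)) →
        IsBalanced (d / e) (Subgroup.zpowers u) :=
  balanced_mod_quotient_general d p hpow
end

section
/- In (ℤ/39ℤ)ˣ, the cyclic subgroups generated by 7 and by 29 are both balanced, but their intersection, the cyclic subgroup generated by 16, is not balanced. -/
/-!
Everything is a finite check once each coset `g ⟨u⟩` is listed as `g, g u, …, g u ^ (n - 1)` for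
some `n` with `u ^ n = 1`. Here `7`, `29` and `16` have orders `12`, `6` and `3` modulo `39`, and
the subgroup `{1, 16, 22}` generated by `16` is itself unbalanced: two of its elements lie below
`39 / 2` and one above.
-/

open Finset

theorem Subgroup.mem_zpowers_iff_exists_lt_of_pow_eq_one {G : Type*} [Group G] {u x : G} {n : ℕ}
    (hn : 0 < n) (hu : u ^ n = 1) : x ∈ zpowers u ↔ ∃ k < n, u ^ k = x := by
  refine ⟨?_, fun ⟨k, _, hk⟩ => hk ▸ npow_mem_zpowers u k⟩
  rintro ⟨m, rfl⟩
  have h_nonneg : 0 ≤ m % (n : ℤ) := Int.emod_nonneg m (by omega)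
  have h_lt : m % (n : ℤ) < n := Int.emod_lt_of_pos m (by omega)
  refine ⟨(m % (n : ℤ)).toNat, by omega, ?_⟩
  rw [← zpow_natCast, Int.toNat_of_nonneg h_nonneg, ← zpow_eq_zpow_emod' m hu]

theorem coset_zpowers_eq_image_range {G : Type*} [Group G] [DecidableEq G] {u : G} {n : ℕ}
    (hn : 0 < n) (hu : u ^ n = 1) (g : G) :
    {x | ∃ h ∈ Subgroup.zpowers u, x = g * h} = ((range n).image (g * u ^ ·) : Set G) := by
  ext x
  simp [Subgroup.mem_zpowers_iff_exists_lt_of_pow_eq_one hn hu, eq_comm]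

theorem isBalanced_zpowers_iff {d n : ℕ} {u : (ZMod d)ˣ} (hn : 0 < n) (hu : u ^ n = 1) :
    IsBalanced d (Subgroup.zpowers u) ↔ ∀ g : (ZMod d)ˣ,
      #{x ∈ (range n).image (g * u ^ ·) | 2 * ((x : (ZMod d)ˣ) : ZMod d).val < d} =
        #{x ∈ (range n).image (g * u ^ ·) | d < 2 * ((x : (ZMod d)ˣ) : ZMod d).val} := by
  refine forall_congr' fun g => ?_
  have h_coset (x : (ZMod d)ˣ) :
      (∃ h ∈ Subgroup.zpowers u, x = g * h) ↔ x ∈ (range n).image (g * u ^ ·) := by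
    rw [← mem_coe, ← coset_zpowers_eq_image_range hn hu g, Set.mem_ofPred_eq]
  simp only [h_coset, ← Set.ncard_coe_finset, coe_filter]

theorem balanced_d39 :
    IsBalanced 39 (Subgroup.zpowers (ZMod.unitOfCoprime 7 (by decide : Nat.Coprime 7 39))) ∧
    IsBalanced 39 (Subgroup.zpowers (ZMod.unitOfCoprime 29 (by decide : Nat.Coprime 29 39))) ∧
    Subgroup.zpowers (ZMod.unitOfCoprime 7 (by decide : Nat.Coprime 7 39)) ⊓
        Subgroup.zpowers (ZMod.unitOfCoprime 29 (by decide : Nat.Coprime 29 39)) =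
      Subgroup.zpowers (ZMod.unitOfCoprime 16 (by decide : Nat.Coprime 16 39)) ∧
    ¬ IsBalanced 39 (Subgroup.zpowers (ZMod.unitOfCoprime 16 (by decide : Nat.Coprime 16 39))) := by
  have h7 : ZMod.unitOfCoprime 7 (by decide : Nat.Coprime 7 39) ^ 12 = 1 := by decide
  have h29 : ZMod.unitOfCoprime 29 (by decide : Nat.Coprime 29 39) ^ 6 = 1 := by decide
  have h16 : ZMod.unitOfCoprime 16 (by decide : Nat.Coprime 16 39) ^ 3 = 1 := by decide
  refine ⟨(isBalanced_zpowers_iff (by norm_num) h7).mpr (by decide),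
    (isBalanced_zpowers_iff (by norm_num) h29).mpr (by decide), ?_,
    (isBalanced_zpowers_iff (by norm_num) h16).not.mpr (by decide)⟩
  ext x
  simp only [Subgroup.mem_inf, Subgroup.mem_zpowers_iff_exists_lt_of_pow_eq_one (by norm_num) h7,
    Subgroup.mem_zpowers_iff_exists_lt_of_pow_eq_one (by norm_num) h29,
    Subgroup.mem_zpowers_iff_exists_lt_of_pow_eq_one (by norm_num) h16]
  revert x
  decide
end
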